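/- arXiv:1708.02506 — 7 statements merged into one kernel-verified Lean document; each statement's English description precedes it below -/
import Mathlib

section
/- Let g₀(x) = -1/x and g₁(x) = -x. For each j ∈ {0,1} there exists a permutation σ_j of {0,1,…,8} such that for every irrational real number x and every i ∈ {0,…,8}, h_i(g_j(x)) = g_j(h_{σ_j(i)}(x)). Consequently, if M is a random matrix uniformly distributed on {E₀,…,E₈} and x is irrational, then h_M(g_j(x)) and g_j(h_M(x)) have the same distribution. -/
open MeasureTheory ProbabilityTheory Filter
open scoped ENNReal

noncomputable def hMap : Fin 9 → ℝ → ℝ :=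
  ![fun x => -x⁻¹,
    fun x => 1 + x,
    fun x => x - 1,
    fun x => 1 - x⁻¹,
    fun x => -1 - x⁻¹,
    fun x => x / (1 + x),
    fun x => x / (1 - x),
    fun x => -(1 + x)⁻¹,
    fun x => (1 - x)⁻¹]

noncomputable def Cfun (x : ℝ) : ℝ := min |x| |x|⁻¹

noncomputable def HMap : Fin 5 → ℝ → ℝ :=
  ![fun x => x,
    fun x => (1 + x)⁻¹,
    fun x => 1 - x,
    fun x => min (x / (1 - x)) ((1 - x) / x),
    fun x => x / (1 + x)]

noncomputable def cfVal (k : ℕ → ℕ) : ℝ :=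
  limUnder atTop (fun n => (((List.range n).map k).foldr (fun a r => ((a : ℝ) + r)⁻¹) 0))

noncomputable def geomHalf : Measure ℕ :=
  Measure.sum (fun n => ((2 : ℝ≥0∞) ^ (n + 1))⁻¹ • Measure.dirac (n + 1))

noncomputable def bern : Measure ℝ :=
  (2 : ℝ≥0∞)⁻¹ • (Measure.dirac 1 + Measure.dirac (-1))

/-- `μ` is the law of the random continued fraction `[K₁,K₂,…]` with `Kᵢ` i.i.d.
geometric of parameter `1/2` (mass `2⁻ⁿ` at `n ≥ 1`). -/
def IsMuStar (μ : Measure ℝ) : Prop :=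
  ∃ (Ω : Type) (_ : MeasurableSpace Ω) (P : Measure Ω) (K : ℕ → Ω → ℕ),
    IsProbabilityMeasure P ∧ (∀ i, Measurable (K i)) ∧
    iIndepFun K P ∧
    (∀ i, P.map (K i) = geomHalf) ∧
    μ = P.map (fun ω => cfVal (fun i => K i ω))

noncomputable def gaussIter : ℕ → ℝ → ℝ
  | 0, x => x
  | n + 1, x => gaussIter n (Int.fract x⁻¹)

/-- the `n`-th digit (starting at `n = 0`) of the continued fraction expansion of `x ∈ (0,1)`. -/
noncomputable def cfDigit (x : ℝ) (n : ℕ) : ℕ := ⌊(gaussIter n x)⁻¹⌋₊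

/-- the Denjoy–Minkowski function of parameter 1/2. -/
noncomputable def chiHalf (y : ℝ) : ℝ :=
  ∑' n : ℕ, (-1 : ℝ) ^ n *
    (2 : ℝ) ^ (-(⌊y⌋ + ∑ j ∈ Finset.range n, (cfDigit (Int.fract y) j : ℤ)))

/-- Minkowski's question mark function evaluated at `[k₁,k₂,…]`. -/
noncomputable def qmark (k : ℕ → ℕ) : ℝ :=
  2 * ∑' n : ℕ, (-1 : ℝ) ^ n * (2 : ℝ) ^ (-(∑ j ∈ Finset.range (n + 1), (k j : ℤ)))

noncomputable def gMap : Fin 2 → ℝ → ℝ := ![fun x => -x⁻¹, fun x => -x]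

noncomputable def unifNine : Measure (Fin 9) := (PMF.uniformOfFintype (Fin 9)).toMeasure

/-! In `PGL₂(ℤ)` the maps `g₀` and `g₁` are the classes of `[[0,-1],[1,0]]` and `[[-1,0],[0,1]]`,
and conjugating each `Eᵢ` by either of them gives `±E_{σ i}` for an involution `σ` of the nine
indices. On Möbius maps this is the identity `hᵢ ∘ g = g ∘ h_{σ i}`, valid away from the poles
`0, ±1`, in particular at every irrational. The uniform law on the indices is invariant under `σ`,
so the two image laws coincide. -/

open Function

def conjIndex : Fin 2 → Fin 9 → Fin 9 :=
  ![![0, 6, 5, 7, 8, 2, 1, 3, 4], ![0, 2, 1, 4, 3, 6, 5, 8, 7]]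

lemma conjIndex_involutive (j : Fin 2) : Involutive (conjIndex j) := by
  intro i
  revert j i
  decide

def conjPerm (j : Fin 2) : Equiv.Perm (Fin 9) := (conjIndex_involutive j).toPerm

lemma hMap_gMap (j : Fin 2) (i : Fin 9) {x : ℝ} (h0 : x ≠ 0) (h1 : x ≠ 1) (h2 : x ≠ -1) :
    hMap i (gMap j x) = gMap j (hMap (conjPerm j i) x) := by
  fin_cases j <;> fin_cases i <;>
    simp only [hMap, gMap, conjPerm, conjIndex, Involutive.coe_toPerm, Fin.reduceFinMk,
      Matrix.cons_val] <;>
    grind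

lemma PMF.map_toMeasure_uniformOfFintype_perm {α : Type*} [Fintype α] [Nonempty α]
    [MeasurableSpace α] [MeasurableSingletonClass α] (σ : Equiv.Perm α) :
    (PMF.uniformOfFintype α).toMeasure.map σ = (PMF.uniformOfFintype α).toMeasure := by
  rw [PMF.toMeasure_map σ _ (measurable_of_finite σ)]
  congr 1
  ext a
  classical
  simp only [PMF.map_apply, PMF.uniformOfFintype_apply, tsum_fintype]
  exact (Equiv.sum_comp σ (fun b => if a = b then _ else 0)).trans (by simp)

/-- there are permutations `σ j` of the nine maps conjugating the random walk
step by `g j`; consequently `h_M (g j x)` and `g j (h_M x)` have the same law when `M` is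
uniform on the nine matrices. -/
theorem stmt0 :
    ∃ σ : Fin 2 → Equiv.Perm (Fin 9),
      (∀ x : ℝ, Irrational x → ∀ j : Fin 2, ∀ i : Fin 9,
        hMap i (gMap j x) = gMap j (hMap (σ j i) x)) ∧
      (∀ x : ℝ, Irrational x → ∀ j : Fin 2,
        Measure.map (fun i : Fin 9 => hMap i (gMap j x)) unifNine =
          Measure.map (fun i : Fin 9 => gMap j (hMap i x)) unifNine) := by
  have hconj (x : ℝ) (hx : Irrational x) (j : Fin 2) (i : Fin 9) :
      hMap i (gMap j x) = gMap j (hMap (conjPerm j i) x) :=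
    hMap_gMap j i hx.ne_zero hx.ne_one (by exact_mod_cast hx.ne_int (-1))
  refine ⟨conjPerm, hconj, fun x hx j => ?_⟩
  have hcomp : (fun i => hMap i (gMap j x)) = (fun i => gMap j (hMap i x)) ∘ conjPerm j :=
    funext (hconj x hx j)
  rw [hcomp, ← Measure.map_map (measurable_of_finite _) (measurable_of_finite _), unifNine,
    PMF.map_toMeasure_uniformOfFintype_perm]
end

section
/- Let ν be a probability measure on ℝ that gives measure zero to the rational numbers and is invariant under the maps x ↦ -x and x ↦ -1/x (each h_i and each of these maps is defined ν-almost everywhere; extend them arbitrarily at their poles). Then the probability measure ν₁ = (1/9) Σ_{i=0}^{8} (h_i)_*ν is again invariant under x ↦ -x and x ↦ -1/x. -/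
open MeasureTheory ProbabilityTheory Filter
open scoped ENNReal

/-!
Both `x ↦ -x` and `x ↦ -1/x` conjugate the family `(hᵢ)` into itself up to a permutation of the
indices: `-hᵢ(x) = h_{τ i}(-x)` everywhere, and `-1/hᵢ(x) = h_{σ i}(-1/x)` for `x ∉ {0, 1, -1}`.
Since `ν` is invariant under these two maps and does not charge the rationals, pushing `ν₁`
forward by either map only permutes the nine summands.
-/

namespace MeasureTheory.Measure

variable {α β ι : Type*} [MeasurableSpace α] [MeasurableSpace β]

lemma map_map_eq_of_ae_comp_eq {ν : Measure α} {h h' : α → β} {g : β → β} {T : α → α}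
    (hh : Measurable h) (hh' : Measurable h') (hg : Measurable g) (hT : Measurable T)
    (hν : ν.map T = ν) (hconj : g ∘ h =ᵐ[ν] h' ∘ T) :
    (ν.map h).map g = ν.map h' := by
  rw [map_map hg hh, map_congr hconj, ← map_map hh' hT, hν]

lemma map_sum_map_eq_of_conj [Fintype ι] {ν : Measure α} {h : ι → α → β} {g : β → β}
    {T : α → α} {σ : ι → ι} (hσ : σ.Bijective) (hh : ∀ i, Measurable (h i)) (hg : Measurable g)
    (hT : Measurable T) (hν : ν.map T = ν) (hconj : ∀ i, g ∘ h i =ᵐ[ν] h (σ i) ∘ T) :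
    (∑ i, ν.map (h i)).map g = ∑ i, ν.map (h i) := by
  rw [map_finset_sum' hg.aemeasurable, ← hσ.sum_comp (fun i => ν.map (h i))]
  exact Finset.sum_congr rfl fun i _ =>
    map_map_eq_of_ae_comp_eq (hh i) (hh _) hg hT hν (hconj i)

end MeasureTheory.Measure

lemma measurable_hMap (i : Fin 9) : Measurable (hMap i) := by
  fin_cases i <;> simp only [hMap, Fin.zero_eta, Fin.mk_one, Fin.reduceFinMk,
    Matrix.cons_val_zero, Matrix.cons_val_one, Matrix.cons_val] <;> fun_prop

def hMapNegIndex : Fin 9 → Fin 9 := ![0, 2, 1, 4, 3, 6, 5, 8, 7]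

def hMapInvIndex : Fin 9 → Fin 9 := ![0, 6, 5, 7, 8, 2, 1, 3, 4]

lemma hMapNegIndex_involutive : hMapNegIndex.Involutive := by
  unfold Function.Involutive; decide

lemma hMapInvIndex_involutive : hMapInvIndex.Involutive := by
  unfold Function.Involutive; decide

lemma neg_hMap (i : Fin 9) (x : ℝ) : -hMap i x = hMap (hMapNegIndex i) (-x) := by
  fin_cases i <;> simp only [hMap, hMapNegIndex, Fin.zero_eta, Fin.mk_one, Fin.reduceFinMk,
    Matrix.cons_val_zero, Matrix.cons_val_one, Matrix.cons_val] <;> ring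

lemma neg_inv_hMap (i : Fin 9) {x : ℝ} (hx₀ : x ≠ 0) (hx₁ : x ≠ 1) (hx₂ : x ≠ -1) :
    -(hMap i x)⁻¹ = hMap (hMapInvIndex i) (-x⁻¹) := by
  fin_cases i <;> simp only [hMap, hMapInvIndex, Fin.zero_eta, Fin.mk_one, Fin.reduceFinMk,
    Matrix.cons_val_zero, Matrix.cons_val_one, Matrix.cons_val] <;> grind

theorem stmt1_general (ν : Measure ℝ)
    (hrat : ν {x : ℝ | ¬ Irrational x} = 0)
    (hneg : ν.map (fun x => -x) = ν)
    (hinv : ν.map (fun x => -x⁻¹) = ν)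
    (ν₁ : Measure ℝ) (hν₁ : ν₁ = (9 : ℝ≥0∞)⁻¹ • ∑ i : Fin 9, ν.map (hMap i)) :
    ν₁.map (fun x => -x) = ν₁ ∧ ν₁.map (fun x => -x⁻¹) = ν₁ := by
  have hirr : ∀ᵐ x ∂ν, Irrational x := ae_iff.2 hrat
  subst hν₁
  simp only [Measure.map_smul]
  constructor
  · congr 1
    exact Measure.map_sum_map_eq_of_conj hMapNegIndex_involutive.bijective measurable_hMap
      measurable_neg measurable_neg hneg fun i => .of_forall (neg_hMap i)
  · congr 1
    refine Measure.map_sum_map_eq_of_conj hMapInvIndex_involutive.bijective measurable_hMap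
      measurable_inv.neg measurable_inv.neg hinv fun i => hirr.mono fun x hx => ?_
    exact neg_inv_hMap i hx.ne_zero hx.ne_one (mod_cast hx.ne_int (-1))

theorem stmt1 (ν : Measure ℝ) [IsProbabilityMeasure ν]
    (hrat : ν {x : ℝ | ¬ Irrational x} = 0)
    (hneg : ν.map (fun x => -x) = ν)
    (hinv : ν.map (fun x => -x⁻¹) = ν)
    (ν₁ : Measure ℝ) (hν₁ : ν₁ = (9 : ℝ≥0∞)⁻¹ • ∑ i : Fin 9, ν.map (hMap i)) :
    ν₁.map (fun x => -x) = ν₁ ∧ ν₁.map (fun x => -x⁻¹) = ν₁ :=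
  stmt1_general ν hrat hneg hinv ν₁ hν₁
end

section
/- Let f be a bounded measurable real-valued function on the set of irrational real numbers satisfying f(-x) = f(x) and f(-1/x) = f(x) for every irrational x. Then the function s(x) = (1/9) Σ_{i=0}^{8} f(h_i(x)) also satisfies s(-x) = s(x) and s(-1/x) = s(x) for every irrational x. -/
open MeasureTheory ProbabilityTheory Filter
open scoped ENNReal

/-! Replacing `x` by `-x` permutes the nine maps up to the sign of their value,
`hᵢ(-x) = -h_{σ i}(x)` with `σ = (1 2)(3 4)(5 6)(7 8)`, so the evenness of `f` turns `s(-x)` into a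
reindexing of `s(x)`. Replacing `x` by `-1/x` permutes `h₁, …, h₈` exactly,
`hᵢ(-1/x) = h_{τ i}(x)` with `τ = (1 3)(2 4)(5 8)(6 7)`, and swaps the remaining terms
`h₀(-1/x) = x` and `h₀(x) = -1/x`, whose values under `f` agree by the second symmetry of `f`. -/

def hMapNegPerm : Equiv.Perm (Fin 9) :=
  Function.Involutive.toPerm ![0, 2, 1, 4, 3, 6, 5, 8, 7] (by unfold Function.Involutive; decide)

def hMapInvPerm : Equiv.Perm (Fin 9) :=
  Function.Involutive.toPerm ![0, 3, 4, 1, 2, 8, 7, 6, 5] (by unfold Function.Involutive; decide)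

theorem hMap_neg (x : ℝ) (i : Fin 9) : hMap i (-x) = -hMap (hMapNegPerm i) x := by
  fin_cases i <;> simp [hMap, hMapNegPerm] <;> ring

theorem hMap_neg_inv {x : ℝ} (hx : x ≠ 0) {i : Fin 9} (hi : i ≠ 0) :
    hMap i (-x⁻¹) = hMap (hMapInvPerm i) x := by
  fin_cases i <;> simp [hMap, hMapInvPerm] at hi ⊢ <;> field_simp <;>
    first | ring1 | (rw [← div_neg]; ring1)

theorem Irrational.hMap {x : ℝ} (hx : Irrational x) (i : Fin 9) : Irrational (hMap i x) := by
  have hx0 := hx.ne_zero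
  fin_cases i <;>
    simp only [_root_.hMap, Fin.zero_eta, Fin.mk_one, Fin.reduceFinMk, Matrix.cons_val]
  · exact hx.inv.neg
  · exact_mod_cast hx.intCast_add 1
  · exact_mod_cast hx.sub_intCast 1
  · exact_mod_cast hx.inv.intCast_sub 1
  · exact_mod_cast hx.inv.intCast_sub (-1)
  · convert (hx.inv.intCast_add 1).inv using 1
    field_simp
    ring
  · convert (hx.inv.sub_intCast 1).inv using 1
    push_cast
    field_simp
  · exact_mod_cast (hx.intCast_add 1).inv.neg
  · exact_mod_cast (hx.intCast_sub 1).inv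

theorem stmt2_general (f : ℝ → ℝ)
    (hneg : ∀ x : ℝ, Irrational x → f (-x) = f x)
    (hinv : ∀ x : ℝ, Irrational x → f (-x⁻¹) = f x)
    (s : ℝ → ℝ) (hs : s = fun x => (1 / 9 : ℝ) * ∑ i : Fin 9, f (hMap i x)) :
    ∀ x : ℝ, Irrational x → s (-x) = s x ∧ s (-x⁻¹) = s x := by
  subst hs
  intro x hx
  refine ⟨congrArg _ ?_, congrArg _ ?_⟩
  · exact Fintype.sum_equiv hMapNegPerm _ _ fun i => by rw [hMap_neg, hneg _ (hx.hMap _)]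
  · refine Fintype.sum_equiv hMapInvPerm _ _ fun i => ?_
    rcases eq_or_ne i 0 with rfl | hi
    · simpa [hMap, hMapInvPerm] using (hinv x hx).symm
    · rw [hMap_neg_inv hx.ne_zero hi]

theorem stmt2 (f : ℝ → ℝ) (hmeas : Measurable f) (B : ℝ) (hbdd : ∀ x, |f x| ≤ B)
    (hneg : ∀ x : ℝ, Irrational x → f (-x) = f x)
    (hinv : ∀ x : ℝ, Irrational x → f (-x⁻¹) = f x)
    (s : ℝ → ℝ) (hs : s = fun x => (1 / 9 : ℝ) * ∑ i : Fin 9, f (hMap i x)) :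
    ∀ x : ℝ, Irrational x → s (-x) = s x ∧ s (-x⁻¹) = s x :=
  stmt2_general f hneg hinv s hs
end

section
/- Let X be a random variable taking values in the irrational real numbers, and let ν be the law of W = C(X) on [0,1]. Then the law of X is invariant under the maps x ↦ -x and x ↦ -1/x if and only if the law of X equals the mixture ∫ μ_w dν(w), where μ_w = (1/4)(δ_w + δ_{-w} + δ_{1/w} + δ_{-1/w}); in that case X has the same distribution as S₂·W'^{S₁}, where W' ~ ν and S₁, S₂ are random signs with P(S_i = 1) = P(S_i = -1) = 1/2, with W', S₁, S₂ independent. -/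
open MeasureTheory ProbabilityTheory Filter
open scoped ENNReal

/-!
The maps `x ↦ ±x^{±1}` form a Klein four-group acting on `ℝ`. The function `C` is invariant under
it, and `(0,1)` is a fundamental domain off `{0, 1, -1}`, a null set for the law `μ` of `X`. If `μ`
is invariant, the group carries `μ|(0,1)` onto the restrictions of `μ` to `(0,1)`, `(1,∞)`,
`(-1,0)`, `(-∞,-1)`, so `μ = ∑_g g_*(μ|(0,1))` and `C_*μ = 4 μ|(0,1)`; hence
`μ = ¼ ∑_g g_*(C_*μ) = ∫ μ_w dν(w)`. Conversely such a mixture is invariant, since the group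
permutes its four terms. Finally, given `W' = w` the variable `S₂ w^{S₁}` has law `μ_w`.
-/

open scoped Pointwise

namespace MeasureTheory

section FundamentalDomain

variable {G α : Type*} [Group G] [MulAction G α] [MeasurableSpace α] [MeasurableConstSMul G α]
  {μ : Measure α} {s : Set α}

theorem IsFundamentalDomain.sum_map_smul_restrict [Countable G] [SMulInvariantMeasure G α μ]
    (h : IsFundamentalDomain G s μ) :
    (Measure.sum fun g : G => (μ.restrict s).map (g • ·)) = μ := by
  refine Eq.trans ?_ h.sum_restrict
  congr 1
  funext g
  rw [← Set.image_smul]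
  exact ((measurePreserving_smul g μ).restrict_image_emb
    (measurableEmbedding_const_smul g) s).map_eq

theorem IsFundamentalDomain.map_eq_card_smul_restrict [Fintype G] [SMulInvariantMeasure G α μ]
    (h : IsFundamentalDomain G s μ) (hs : MeasurableSet s) {f : α → α} (hf : Measurable f)
    (hf_smul : ∀ (g : G) x, f (g • x) = f x) (hf_id : ∀ x ∈ s, f x = x) :
    μ.map f = (Fintype.card G : ℝ≥0∞) • μ.restrict s := by
  have hf_restrict : (μ.restrict s).map f = μ.restrict s := by
    rw [Measure.map_congr (g := id) ((ae_restrict_iff' hs).2 (.of_forall hf_id)), Measure.map_id]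
  conv_lhs => rw [← h.sum_map_smul_restrict]
  rw [Measure.map_sum hf.aemeasurable, Measure.sum_fintype]
  simp_rw [Measure.map_map hf (measurable_const_smul _), Function.comp_def, hf_smul, hf_restrict,
    Finset.sum_const, Finset.card_univ, Nat.cast_smul_eq_nsmul]

theorem IsFundamentalDomain.eq_smul_sum_map_smul_map [Fintype G] [SMulInvariantMeasure G α μ]
    (h : IsFundamentalDomain G s μ) (hs : MeasurableSet s) {f : α → α} (hf : Measurable f)
    (hf_smul : ∀ (g : G) x, f (g • x) = f x) (hf_id : ∀ x ∈ s, f x = x) :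
    μ = (Fintype.card G : ℝ≥0∞)⁻¹ • ∑ g : G, (μ.map f).map (g • ·) := by
  rw [h.map_eq_card_smul_restrict hs hf hf_smul hf_id]
  simp_rw [Measure.map_smul, ← Finset.smul_sum, smul_smul]
  rw [ENNReal.inv_mul_cancel (by simp) (by simp), one_smul, ← Measure.sum_fintype,
    h.sum_map_smul_restrict]

instance smulInvariantMeasure_sum_map_smul [Countable G] (ν : Measure α) :
    SMulInvariantMeasure G α (Measure.sum fun g : G => ν.map (g • ·)) := by
  refine ⟨fun c A hA => ?_⟩
  rw [Measure.sum_apply _ (measurable_const_smul c hA), Measure.sum_apply _ hA]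
  simp_rw [Measure.map_apply (measurable_const_smul _) (measurable_const_smul c hA),
    Measure.map_apply (measurable_const_smul _) hA, ← Set.preimage_comp, Function.comp_def,
    smul_smul]
  exact (Equiv.mulLeft c).tsum_eq fun g => ν ((g • ·) ⁻¹' A)

end FundamentalDomain

namespace Measure

variable {α β γ : Type*} [MeasurableSpace α] [MeasurableSpace β] [MeasurableSpace γ]

theorem bind_smul_sum_dirac {ι : Type*} [Fintype ι] (ν : Measure α) (c : ℝ≥0∞) {f : ι → α → β}
    (hf : ∀ i, Measurable (f i)) :
    ν.bind (fun a => c • ∑ i, dirac (f i a)) = c • ∑ i, ν.map (f i) := by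
  have h_apply {s : Set β} (hs : MeasurableSet s) (a : α) :
      (c • ∑ i, dirac (f i a)) s = c * ∑ i, s.indicator 1 (f i a) := by
    simp only [smul_apply, coe_finsetSum, Finset.sum_apply, dirac_apply' _ hs, smul_eq_mul]
  have hκ : Measurable fun a => c • ∑ i, dirac (f i a) :=
    measurable_of_measurable_coe _ fun s hs => by
      simp only [h_apply hs]
      fun_prop
  ext s hs
  simp only [bind_apply hs hκ.aemeasurable, h_apply hs, smul_apply, coe_finsetSum,
    Finset.sum_apply, smul_eq_mul]
  rw [lintegral_const_mul _ (by fun_prop), lintegral_finsetSum _ (by fun_prop)]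
  congr 1
  refine Finset.sum_congr rfl fun i _ => ?_
  rw [map_apply (hf i) hs, ← lintegral_indicator_one (hf i hs)]
  rfl

theorem map_prod_eq_bind (ν : Measure α) (ρ : Measure β) [SFinite ρ] {Φ : α × β → γ}
    (hΦ : Measurable Φ) : (ν.prod ρ).map Φ = ν.bind fun a => ρ.map fun b => Φ (a, b) := by
  have h_apply {s : Set γ} (hs : MeasurableSet s) (a : α) :
      (ρ.map fun b => Φ (a, b)) s = ρ (Prod.mk a ⁻¹' (Φ ⁻¹' s)) :=
    map_apply (hΦ.comp measurable_prodMk_left) hs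
  have hκ : Measurable fun a => ρ.map fun b => Φ (a, b) :=
    measurable_of_measurable_coe _ fun s hs => by
      simpa only [h_apply hs] using measurable_measure_prodMk_left (hΦ hs)
  ext s hs
  rw [map_apply hΦ hs, prod_apply (hΦ hs), bind_apply hs hκ.aemeasurable]
  simp_rw [h_apply hs]

end Measure

end MeasureTheory

open MeasureTheory

section Klein

/-- The Klein four-group `{x, -x, x⁻¹, -x⁻¹}`, written `(t, s) • x = s * x ^ t` so that
`S₂ * W ^ S₁` is `(S₁, S₂) • W`. -/
noncomputable abbrev kleinMulAction : MulAction (ℤˣ × ℤˣ) ℝ where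
  smul p x := p.2 * x ^ (p.1 : ℤ)
  one_smul x := by change ((1 : ℤˣ) : ℝ) * x ^ ((1 : ℤˣ) : ℤ) = x; simp
  mul_smul p q x := by
    change ((p.2 * q.2 : ℤˣ) : ℝ) * x ^ ((p.1 * q.1 : ℤˣ) : ℤ) =
      p.2 * (q.2 * x ^ (q.1 : ℤ)) ^ (p.1 : ℤ)
    rcases Int.units_eq_one_or p.1 with h | h <;> rcases Int.units_eq_one_or q.2 with h' | h' <;>
      simp [h, h']

attribute [local instance] kleinMulAction

lemma klein_smul_def (p : ℤˣ × ℤˣ) (x : ℝ) : p • x = p.2 * x ^ (p.1 : ℤ) := rfl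

theorem klein_measurableConstSMul : MeasurableConstSMul (ℤˣ × ℤˣ) ℝ :=
  ⟨fun p => by simp_rw [klein_smul_def]; fun_prop⟩

attribute [local instance] klein_measurableConstSMul

lemma sum_klein {M : Type*} [AddCommMonoid M] (F : (ℝ → ℝ) → M) :
    ∑ p : ℤˣ × ℤˣ, F (p • ·) =
      F (fun x => x) + F (fun x => -x) + F (fun x => x⁻¹) + F (fun x => -x⁻¹) := by
  simp [Fintype.sum_prod_type, UnitsInt.univ, klein_smul_def, add_assoc]

lemma Cfun_smul (p : ℤˣ × ℤˣ) (x : ℝ) : Cfun (p • x) = Cfun x := by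
  rcases Int.units_eq_one_or p.1 with h | h <;> rcases Int.units_eq_one_or p.2 with h' | h' <;>
    simp [Cfun, klein_smul_def, h, h', min_comm]

lemma Cfun_of_mem_Ioo {x : ℝ} (hx : x ∈ Set.Ioo 0 1) : Cfun x = x := by
  rw [Cfun, abs_of_pos hx.1]
  exact min_eq_left (hx.2.le.trans ((one_le_inv₀ hx.1).2 hx.2.le))

lemma measurable_Cfun : Measurable Cfun := by
  unfold Cfun
  fun_prop

lemma exists_klein_smul_mem_Ioo {x : ℝ} (h0 : x ≠ 0) (h1 : x ≠ 1) (h1' : x ≠ -1) :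
    ∃ p : ℤˣ × ℤˣ, p • x ∈ Set.Ioo 0 1 := by
  have h_inv {y : ℝ} (hy : 1 < y) : y⁻¹ ∈ Set.Ioo 0 1 :=
    ⟨inv_pos.2 (zero_lt_one.trans hy), inv_lt_one_of_one_lt₀ hy⟩
  rcases lt_or_gt_of_ne h0 with hneg | hpos
  · rcases lt_or_gt_of_ne h1' with h | h
    · exact ⟨(-1, -1), by simpa [klein_smul_def] using h_inv (lt_neg.1 h)⟩
    · exact ⟨(1, -1), by simp [klein_smul_def]; constructor <;> linarith⟩
  · rcases lt_or_gt_of_ne h1 with h | h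
    · exact ⟨1, by simpa [klein_smul_def] using And.intro hpos h⟩
    · exact ⟨(-1, 1), by simpa [klein_smul_def] using h_inv h⟩

lemma eq_one_of_klein_smul_mem_Ioo {x : ℝ} (hx : x ∈ Set.Ioo 0 1) {p : ℤˣ × ℤˣ}
    (hp : p • x ∈ Set.Ioo 0 1) : p = 1 := by
  obtain ⟨t, s⟩ := p
  have h_inv : 1 < x⁻¹ := (one_lt_inv₀ hx.1).2 hx.2
  rcases Int.units_eq_one_or t with rfl | rfl <;> rcases Int.units_eq_one_or s with rfl | rfl
  · rfl
  all_goals simp [klein_smul_def] at hp; linarith [hx.1, hp.1, hp.2]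

lemma smulInvariantMeasure_klein_iff (μ : Measure ℝ) :
    SMulInvariantMeasure (ℤˣ × ℤˣ) ℝ μ ↔
      μ.map (fun x => -x) = μ ∧ μ.map (fun x => -x⁻¹) = μ := by
  have h_neg : (((1, -1) : ℤˣ × ℤˣ) • ·) = fun x : ℝ => -x := by funext; simp [klein_smul_def]
  have h_neg_inv : (((-1, -1) : ℤˣ × ℤˣ) • ·) = fun x : ℝ => -x⁻¹ := by
    funext; simp [klein_smul_def]
  have h_tfae : SMulInvariantMeasure (ℤˣ × ℤˣ) ℝ μ ↔ ∀ p : ℤˣ × ℤˣ, μ.map (p • ·) = μ :=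
    (smulInvariantMeasure_tfae (ℤˣ × ℤˣ) μ).out 0 5
  refine h_tfae.trans ⟨fun h => ⟨h_neg ▸ h _, h_neg_inv ▸ h _⟩, fun ⟨h₁, h₂⟩ p => ?_⟩
  have h_inv : μ.map (fun x => x⁻¹) = μ := by
    rw [show (fun x : ℝ => x⁻¹) = (fun x => -x) ∘ (fun x => -x⁻¹) by funext; simp,
      ← Measure.map_map (by fun_prop) (by fun_prop), h₂, h₁]
  obtain ⟨t, s⟩ := p
  rcases Int.units_eq_one_or t with rfl | rfl <;> rcases Int.units_eq_one_or s with rfl | rfl <;>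
    simp [klein_smul_def, h₁, h₂, h_inv]

lemma isFundamentalDomain_Ioo {μ : Measure ℝ} [SMulInvariantMeasure (ℤˣ × ℤˣ) ℝ μ]
    (hirr : ∀ᵐ x ∂μ, Irrational x) : IsFundamentalDomain (ℤˣ × ℤˣ) (Set.Ioo 0 1) μ :=
  .mk'' measurableSet_Ioo.nullMeasurableSet
    (hirr.mono fun x hx =>
      exists_klein_smul_mem_Ioo hx.ne_zero hx.ne_one (by simpa using hx.ne_int (-1)))
    (fun p hp => Disjoint.aedisjoint <| Set.disjoint_left.2 fun y hy hy' =>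
      hp <| inv_eq_one.1 <|
        eq_one_of_klein_smul_mem_Ioo hy' (Set.mem_smul_set_iff_inv_smul_mem.1 hy))
    (fun p => (measurePreserving_smul p μ).quasiMeasurePreserving)

/-- The measure `μ_w`. -/
noncomputable def kleinKernel (w : ℝ) : Measure ℝ :=
  (4 : ℝ≥0∞)⁻¹ • (Measure.dirac w + Measure.dirac (-w) + Measure.dirac w⁻¹ + Measure.dirac (-w⁻¹))

lemma bind_kleinKernel (ν : Measure ℝ) :
    ν.bind kleinKernel = (4 : ℝ≥0∞)⁻¹ • ∑ p : ℤˣ × ℤˣ, ν.map (p • ·) := by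
  have h_kernel :
      kleinKernel = fun w => (4 : ℝ≥0∞)⁻¹ • ∑ p : ℤˣ × ℤˣ, Measure.dirac (p • w) := by
    funext w
    rw [sum_klein fun f => Measure.dirac (f w)]
    rfl
  rw [h_kernel]
  exact Measure.bind_smul_sum_dirac ν _ measurable_const_smul

theorem map_invariant_iff_eq_bind_kleinKernel (μ : Measure ℝ) (hirr : ∀ᵐ x ∂μ, Irrational x) :
    (μ.map (fun x => -x) = μ ∧ μ.map (fun x => -x⁻¹) = μ) ↔
      μ = (μ.map Cfun).bind kleinKernel := by
  have h_card : (Fintype.card (ℤˣ × ℤˣ) : ℝ≥0∞) = 4 := rfl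
  rw [bind_kleinKernel, ← smulInvariantMeasure_klein_iff, ← h_card]
  refine ⟨fun _ => ?_, fun h => ?_⟩
  · exact (isFundamentalDomain_Ioo hirr).eq_smul_sum_map_smul_map measurableSet_Ioo
      measurable_Cfun Cfun_smul fun _ => Cfun_of_mem_Ioo
  · rw [h, ← Measure.sum_fintype]
    infer_instance

end Klein

instance isProbabilityMeasure_bern : IsProbabilityMeasure bern :=
  ⟨by simp [bern, ← two_mul, ENNReal.mul_inv_cancel]⟩

lemma bern_prod_bern : bern.prod bern = (4 : ℝ≥0∞)⁻¹ • (Measure.dirac (1, 1) +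
    Measure.dirac (1, -1) + Measure.dirac (-1, 1) + Measure.dirac (-1, -1)) := by
  rw [bern, Measure.prod_smul_left, Measure.prod_smul_right, smul_smul, Measure.add_prod,
    Measure.prod_add, Measure.prod_add, Measure.dirac_prod_dirac, Measure.dirac_prod_dirac,
    Measure.dirac_prod_dirac, Measure.dirac_prod_dirac, ← add_assoc,
    ← ENNReal.mul_inv (by norm_num) (by norm_num)]
  norm_num

lemma map_bern_prod_bern (w : ℝ) :
    (bern.prod bern).map (fun q : ℝ × ℝ => q.2 * w ^ q.1) = kleinKernel w := by
  have hΦ : Measurable fun q : ℝ × ℝ => q.2 * w ^ q.1 := by fun_prop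
  simp [bern_prod_bern, Measure.map_smul, Measure.map_add _ _ hΦ, Measure.map_dirac,
    Real.rpow_neg_one, kleinKernel]

theorem map_prod_bern_eq_bind_kleinKernel (ν : Measure ℝ) :
    (ν.prod (bern.prod bern)).map (fun p : ℝ × ℝ × ℝ => p.2.2 * p.1 ^ p.2.1) =
      ν.bind kleinKernel := by
  rw [Measure.map_prod_eq_bind _ _ (by fun_prop)]
  simp_rw [map_bern_prod_bern]

theorem stmt3_general {Ω : Type*} [MeasurableSpace Ω] (P : Measure Ω)
    (X : Ω → ℝ) (hX : Measurable X) (hirr : ∀ᵐ ω ∂P, Irrational (X ω))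
    (ν : Measure ℝ) (hν : ν = P.map (fun ω => Cfun (X ω))) :
    (((P.map X).map (fun x => -x) = P.map X ∧ (P.map X).map (fun x => -x⁻¹) = P.map X) ↔
      P.map X = ν.bind (fun w => (4 : ℝ≥0∞)⁻¹ •
        (Measure.dirac w + Measure.dirac (-w) + Measure.dirac w⁻¹ + Measure.dirac (-w⁻¹)))) ∧
    (((P.map X).map (fun x => -x) = P.map X ∧ (P.map X).map (fun x => -x⁻¹) = P.map X) →
      P.map X = (ν.prod (bern.prod bern)).map
        (fun p : ℝ × ℝ × ℝ => p.2.2 * p.1 ^ p.2.1)) := by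
  have hν' : ν = (P.map X).map Cfun := by
    rw [hν, Measure.map_map measurable_Cfun hX]
    rfl
  -- `{x | Irrational x}` is by definition the complement of the countable `range ((↑) : ℚ → ℝ)`.
  have hirr' : ∀ᵐ x ∂P.map X, Irrational x :=
    (ae_map_iff hX.aemeasurable (Set.countable_range _).measurableSet.compl).2 hirr
  have key := map_invariant_iff_eq_bind_kleinKernel (P.map X) hirr'
  rw [← hν'] at key
  exact ⟨key, fun h => (key.1 h).trans (map_prod_bern_eq_bind_kleinKernel ν).symm⟩

theorem stmt3 {Ω : Type*} [MeasurableSpace Ω] (P : Measure Ω) [IsProbabilityMeasure P]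
    (X : Ω → ℝ) (hX : Measurable X) (hirr : ∀ᵐ ω ∂P, Irrational (X ω))
    (ν : Measure ℝ) (hν : ν = P.map (fun ω => Cfun (X ω))) :
    (((P.map X).map (fun x => -x) = P.map X ∧ (P.map X).map (fun x => -x⁻¹) = P.map X) ↔
      P.map X = ν.bind (fun w => (4 : ℝ≥0∞)⁻¹ •
        (Measure.dirac w + Measure.dirac (-w) + Measure.dirac w⁻¹ + Measure.dirac (-w⁻¹)))) ∧
    (((P.map X).map (fun x => -x) = P.map X ∧ (P.map X).map (fun x => -x⁻¹) = P.map X) →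
      P.map X = (ν.prod (bern.prod bern)).map
        (fun p : ℝ × ℝ × ℝ => p.2.2 * p.1 ^ p.2.1)) :=
  stmt3_general P X hX hirr ν hν
end

section
/- Let ν be a probability measure on [0,1] satisfying (H₂)_*ν = ν and (H₃)_*ν = ν. Then (1/9)(H₀)_*ν + (2/9) Σ_{i=1}^{4} (H_i)_*ν = ν; in particular (1/2)((H₁)_*ν + (H₄)_*ν) = ν. Equivalently, if W₀ ~ ν and I is an independent random index with P(I=0)=1/9 and P(I=i)=2/9 for i=1,2,3,4, then H_I(W₀) ~ ν. -/
open MeasureTheory ProbabilityTheory Filter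
open scoped ENNReal

/- The pair (H₁ ∘ H₃, H₄ ∘ H₃) is pointwise either (id, H₂) or (H₂, id): indeed H₁ ∘ H₃ is pointwise
`x` or `1 - x`, and `H₄ = 1 - H₁` away from `-1`, a value `H₃` never takes. Splitting `ν` along the
set where the first alternative holds gives `(H₁)_*ν + (H₄)_*ν = (H₁ H₃)_*ν + (H₄ H₃)_*ν = ν + (H₂)_*ν
= 2ν`, and the `1/9, 2/9` identity follows from this by arithmetic. -/

theorem MeasureTheory.Measure.map_add_map_eq_of_swap {α β : Type*} [MeasurableSpace α]
    [MeasurableSpace β] [MeasurableEq β] {μ : Measure α} {f g p q : α → β}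
    (hf : Measurable f) (hg : Measurable g) (hp : Measurable p) (hq : Measurable q)
    (h : ∀ x, (f x = p x ∧ g x = q x) ∨ (f x = q x ∧ g x = p x)) :
    μ.map f + μ.map g = μ.map p + μ.map q := by
  set s := {x | f x = p x ∧ g x = q x}
  have hs : MeasurableSet s := (measurableSet_eq_fun hf hp).inter (measurableSet_eq_fun hg hq)
  have h_compl (x) (hx : x ∉ s) : f x = q x ∧ g x = p x := (h x).resolve_left hx
  have h_on : ∀ φ ψ : α → β, (∀ x ∈ s, φ x = ψ x) → (μ.restrict s).map φ = (μ.restrict s).map ψ :=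
    fun φ ψ h => map_congr (ae_restrict_of_forall_mem hs h)
  have h_on_compl : ∀ φ ψ : α → β, (∀ x ∉ s, φ x = ψ x) →
      (μ.restrict sᶜ).map φ = (μ.restrict sᶜ).map ψ :=
    fun φ ψ h => map_congr (ae_restrict_of_forall_mem hs.compl h)
  rw [← restrict_add_restrict_compl (μ := μ) hs]
  simp only [Measure.map_add _ _ hf, Measure.map_add _ _ hg, Measure.map_add _ _ hp,
    Measure.map_add _ _ hq]
  rw [h_on f p fun x hx => hx.1, h_on g q fun x hx => hx.2,
    h_on_compl f q fun x hx => (h_compl x hx).1, h_on_compl g p fun x hx => (h_compl x hx).2]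
  abel

theorem HMap_zero_eq_id : HMap 0 = id := rfl

theorem HMap_one_apply (x : ℝ) : HMap 1 x = (1 + x)⁻¹ := rfl

theorem HMap_two_apply (x : ℝ) : HMap 2 x = 1 - x := rfl

theorem HMap_three_apply (x : ℝ) : HMap 3 x = min (x / (1 - x)) ((1 - x) / x) := rfl

theorem HMap_four_apply (x : ℝ) : HMap 4 x = x / (1 + x) := rfl

@[fun_prop]
theorem measurable_HMap (i : Fin 5) : Measurable (HMap i) := by
  fin_cases i <;> simp only [HMap] <;> dsimp <;> fun_prop

theorem HMap_three_ne_neg_one (x : ℝ) : HMap 3 x ≠ -1 := by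
  rw [HMap_three_apply]
  -- a zero denominator would give `0 = -1`; clearing a nonzero one gives `x = x - 1` or `1 = 0`
  rcases min_choice (x / (1 - x)) ((1 - x) / x) with h | h <;> rw [h] <;> intro h' <;>
    rw [div_eq_iff (fun h0 => by simp [h0] at h')] at h' <;> linarith

theorem HMap_four_eq_one_sub_HMap_one {y : ℝ} (hy : y ≠ -1) : HMap 4 y = 1 - HMap 1 y := by
  have : 1 + y ≠ 0 := fun h => hy (by linarith)
  rw [HMap_four_apply, HMap_one_apply]
  field_simp
  ring

theorem HMap_one_HMap_three_eq_self_or_eq_one_sub (x : ℝ) :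
    HMap 1 (HMap 3 x) = x ∨ HMap 1 (HMap 3 x) = 1 - x := by
  rw [HMap_one_apply, HMap_three_apply]
  rcases min_choice (x / (1 - x)) ((1 - x) / x) with h | h <;> rw [h]
  · rcases eq_or_ne x 1 with rfl | hx
    · norm_num
    · have : 1 - x ≠ 0 := sub_ne_zero.2 hx.symm
      right
      rw [inv_eq_iff_eq_inv]
      field_simp
      ring
  · rcases eq_or_ne x 0 with rfl | hx
    · norm_num
    · left
      rw [inv_eq_iff_eq_inv]
      field_simp
      ring

theorem HMap_one_HMap_three_and_HMap_four_HMap_three_swap (x : ℝ) :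
    (HMap 1 (HMap 3 x) = x ∧ HMap 4 (HMap 3 x) = HMap 2 x) ∨
      (HMap 1 (HMap 3 x) = HMap 2 x ∧ HMap 4 (HMap 3 x) = x) := by
  rw [HMap_four_eq_one_sub_HMap_one (HMap_three_ne_neg_one x), HMap_two_apply]
  rcases HMap_one_HMap_three_eq_self_or_eq_one_sub x with h | h <;> rw [h] <;> simp

theorem map_HMap_one_add_map_HMap_four {ν : Measure ℝ} (h2 : ν.map (HMap 2) = ν)
    (h3 : ν.map (HMap 3) = ν) : ν.map (HMap 1) + ν.map (HMap 4) = ν + ν :=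
  calc ν.map (HMap 1) + ν.map (HMap 4)
      = (ν.map (HMap 3)).map (HMap 1) + (ν.map (HMap 3)).map (HMap 4) := by rw [h3]
    _ = ν.map (HMap 1 ∘ HMap 3) + ν.map (HMap 4 ∘ HMap 3) := by
      simp only [Measure.map_map (measurable_HMap _) (measurable_HMap 3)]
    _ = ν.map id + ν.map (HMap 2) :=
      Measure.map_add_map_eq_of_swap (by fun_prop) (by fun_prop) measurable_id
        (measurable_HMap 2) HMap_one_HMap_three_and_HMap_four_HMap_three_swap
    _ = ν + ν := by rw [Measure.map_id, h2]

theorem ninth_smul_add_two_ninths_smul_four {α : Type*} [MeasurableSpace α] (μ : Measure α) :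
    (9 : ℝ≥0∞)⁻¹ • μ + (2 / 9 : ℝ≥0∞) • (μ + μ + μ + μ) = μ := by
  ext s
  simp only [Measure.add_apply, Measure.smul_apply, smul_eq_mul, ENNReal.div_eq_inv_mul]
  ring_nf
  rw [mul_right_comm, ENNReal.inv_mul_cancel (by norm_num) (by norm_num), one_mul]

theorem stmt8_general (ν : Measure ℝ)
    (h2 : ν.map (HMap 2) = ν) (h3 : ν.map (HMap 3) = ν) :
    ((9 : ℝ≥0∞)⁻¹ • ν.map (HMap 0) +
        (2 / 9 : ℝ≥0∞) • ∑ i : Fin 4, ν.map (HMap i.succ) = ν) ∧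
    (2 : ℝ≥0∞)⁻¹ • (ν.map (HMap 1) + ν.map (HMap 4)) = ν := by
  have h_pair := map_HMap_one_add_map_HMap_four h2 h3
  refine ⟨?_, ?_⟩
  · rw [HMap_zero_eq_id, Measure.map_id, Fin.sum_univ_four]
    change _ + _ • (ν.map (HMap 1) + ν.map (HMap 2) + ν.map (HMap 3) + ν.map (HMap 4)) = ν
    rw [h2, h3, add_right_comm _ ν (ν.map (HMap 4)), add_right_comm _ ν (ν.map (HMap 4)), h_pair,
      ninth_smul_add_two_ninths_smul_four]
  · rw [h_pair, ← two_smul ℝ≥0∞ ν, smul_smul,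
      ENNReal.inv_mul_cancel two_ne_zero ENNReal.ofNat_ne_top, one_smul]

theorem stmt8 (ν : Measure ℝ) [IsProbabilityMeasure ν]
    (hsupp : ν (Set.Icc (0 : ℝ) 1)ᶜ = 0)
    (h2 : ν.map (HMap 2) = ν) (h3 : ν.map (HMap 3) = ν) :
    ((9 : ℝ≥0∞)⁻¹ • ν.map (HMap 0) +
        (2 / 9 : ℝ≥0∞) • ∑ i : Fin 4, ν.map (HMap i.succ) = ν) ∧
    (2 : ℝ≥0∞)⁻¹ • (ν.map (HMap 1) + ν.map (HMap 4)) = ν :=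
  stmt8_general ν h2 h3
end

section
/- Let ν be an atomless probability measure on [0,1] satisfying (H₂)_*ν = ν and (H₃)_*ν = ν. Then ν = μ⋆, i.e. ν is the law of the random continued fraction [K₁,K₂,…] where K₁,K₂,… are i.i.d. with P(K_i = n) = 2^{-n} for n = 1,2,…. -/
open MeasureTheory ProbabilityTheory Filter
open scoped ENNReal

/-!
The Farey cells of depth `n` are the images of `[0, 1]` under the `n`-fold compositions of the
inverse branches `x ↦ x / (1 + x)` and `x ↦ 1 / (1 + x)` of `H₃`; they cover `[0, 1]` and meet only
at endpoints. If `ν` is `H₃`-invariant, the two children of a cell together carry the mass of the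
cell, since `H₃` maps each child onto it; `H₂` swaps the two children, so, `ν` being atomless,
every cell of depth `n` has mass `2⁻ⁿ`. The same holds for `μ⋆`: `[K₁, K₂, …]` lies in a cell, up
to its endpoints, exactly when the digits lie in a cylinder whose probability is `2⁻ⁿ` by the
memorylessness of `Geom(1/2)`, and `μ⋆` is atomless because a point lies in at most two cells of
each depth. Finally, an atomless measure on `[0, 1]` is determined by its cell masses: they fix its
distribution function at the endpoints of the cells, and every point of `[0, 1]` lies in a cell of
depth `n`, of mass `2⁻ⁿ`.
-/

namespace Farey

open Set Topology

/-! ### Farey cells -/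

/-- The inverse branches of `H₃` on `[0, 1/2]` and on `[1/2, 1]`. -/
noncomputable def left (x : ℝ) : ℝ := x / (1 + x)

noncomputable def right (x : ℝ) : ℝ := (1 + x)⁻¹

/-- Endpoints of the Farey cells: the cell of `b :: s` is the image of the cell of `s` under the
inverse branch `b` of `H₃`, which for `b = true` reverses the order. -/
noncomputable def ends : List Bool → ℝ × ℝ
  | [] => (0, 1)
  | false :: s => (left (ends s).1, left (ends s).2)
  | true :: s => (right (ends s).2, right (ends s).1)

noncomputable def lo (s : List Bool) : ℝ := (ends s).1

noncomputable def hi (s : List Bool) : ℝ := (ends s).2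

def cell (s : List Bool) : Set ℝ := Icc (lo s) (hi s)

@[simp] lemma lo_nil : lo [] = 0 := rfl
@[simp] lemma hi_nil : hi [] = 1 := rfl
@[simp] lemma lo_cons_false (s : List Bool) : lo (false :: s) = left (lo s) := rfl
@[simp] lemma hi_cons_false (s : List Bool) : hi (false :: s) = left (hi s) := rfl
@[simp] lemma lo_cons_true (s : List Bool) : lo (true :: s) = right (hi s) := rfl
@[simp] lemma hi_cons_true (s : List Bool) : hi (true :: s) = right (lo s) := rfl

@[simp] lemma cell_nil : cell [] = Icc 0 1 := rfl

section Branches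

variable {a b x : ℝ}

lemma left_nonneg (ha : 0 ≤ a) : 0 ≤ left a := by
  unfold left; positivity

lemma left_le_left_iff (ha : 0 ≤ a) (hb : 0 ≤ b) : left a ≤ left b ↔ a ≤ b := by
  unfold left
  rw [div_le_div_iff₀ (by linarith) (by linarith)]
  constructor <;> intro h <;> nlinarith

lemma left_le_half (ha : 0 ≤ a) (ha' : a ≤ 1) : left a ≤ 1 / 2 := by
  unfold left
  rw [div_le_div_iff₀ (by linarith) (by norm_num)]
  linarith

lemma right_le_right_iff (ha : 0 ≤ a) (hb : 0 ≤ b) : right a ≤ right b ↔ b ≤ a := by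
  unfold right
  rw [inv_le_inv₀ (by linarith) (by linarith)]
  constructor <;> intro h <;> linarith

lemma half_le_right (ha : 0 ≤ a) (ha' : a ≤ 1) : 1 / 2 ≤ right a := by
  unfold right
  rw [le_inv_comm₀ (by norm_num) (by linarith)]
  linarith

lemma right_le_one (ha : 0 ≤ a) : right a ≤ 1 := by
  unfold right
  rw [inv_le_one₀ (by linarith)]
  linarith

lemma left_add_right (ha : 0 ≤ a) : left a + right a = 1 := by
  unfold left right
  field_simp
  ring

lemma left_div_one_sub (hx : x < 1) : left (x / (1 - x)) = x := by
  have : 1 - x ≠ 0 := by linarith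
  unfold left
  field_simp
  ring

lemma right_one_sub_div (hx : x ≠ 0) : right ((1 - x) / x) = x := by
  unfold right
  field_simp
  ring_nf

lemma left_inv (hx : 0 < x) : left x⁻¹ = (x + 1)⁻¹ := by
  unfold left
  field_simp

end Branches

lemma zero_le_lo_le_hi_le_one (s : List Bool) : 0 ≤ lo s ∧ lo s ≤ hi s ∧ hi s ≤ 1 := by
  induction s with
  | nil => norm_num
  | cons b t ih =>
    obtain ⟨h0, h1, h2⟩ := ih
    have h0' : 0 ≤ hi t := h0.trans h1
    cases b
    · exact ⟨left_nonneg h0, (left_le_left_iff h0 h0').2 h1,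
        (left_le_half h0' h2).trans (by norm_num)⟩
    · exact ⟨(half_le_right h0' h2).trans' (by norm_num), (right_le_right_iff h0' h0).2 h1,
        right_le_one h0⟩

lemma lo_nonneg (s : List Bool) : 0 ≤ lo s := (zero_le_lo_le_hi_le_one s).1
lemma lo_le_hi (s : List Bool) : lo s ≤ hi s := (zero_le_lo_le_hi_le_one s).2.1
lemma hi_le_one (s : List Bool) : hi s ≤ 1 := (zero_le_lo_le_hi_le_one s).2.2
lemma hi_nonneg (s : List Bool) : 0 ≤ hi s := (lo_nonneg s).trans (lo_le_hi s)

lemma left_mem_cell {s : List Bool} {x : ℝ} (hx : x ∈ cell s) : left x ∈ cell (false :: s) :=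
  have hx0 := (lo_nonneg s).trans hx.1
  ⟨(left_le_left_iff (lo_nonneg s) hx0).2 hx.1, (left_le_left_iff hx0 (hi_nonneg s)).2 hx.2⟩

lemma right_mem_cell {s : List Bool} {x : ℝ} (hx : x ∈ cell s) : right x ∈ cell (true :: s) :=
  have hx0 := (lo_nonneg s).trans hx.1
  ⟨(right_le_right_iff (hi_nonneg s) hx0).2 hx.2, (right_le_right_iff hx0 (lo_nonneg s)).2 hx.1⟩

lemma mem_cell_cons_false {s : List Bool} {x : ℝ} :
    x ∈ cell (false :: s) ↔ 0 ≤ x ∧ x ≤ 1 / 2 ∧ x / (1 - x) ∈ cell s := by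
  constructor
  · intro hx
    have hx0 : 0 ≤ x := (lo_nonneg _).trans hx.1
    have hx2 : x ≤ 1 / 2 := hx.2.trans (left_le_half (hi_nonneg s) (hi_le_one s))
    have hy : 0 ≤ x / (1 - x) := div_nonneg hx0 (by linarith)
    rw [← left_div_one_sub (x := x) (by linarith)] at hx
    exact ⟨hx0, hx2, (left_le_left_iff (lo_nonneg s) hy).1 hx.1,
      (left_le_left_iff hy (hi_nonneg s)).1 hx.2⟩
  · rintro ⟨-, hx2, hy⟩
    simpa [left_div_one_sub (x := x) (by linarith)] using left_mem_cell hy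

lemma mem_cell_cons_true {s : List Bool} {x : ℝ} :
    x ∈ cell (true :: s) ↔ 1 / 2 ≤ x ∧ x ≤ 1 ∧ (1 - x) / x ∈ cell s := by
  constructor
  · intro hx
    have hx2 : 1 / 2 ≤ x := (half_le_right (hi_nonneg s) (hi_le_one s)).trans hx.1
    have hx1 : x ≤ 1 := hx.2.trans (right_le_one (lo_nonneg s))
    have hy : 0 ≤ (1 - x) / x := div_nonneg (by linarith) (by linarith)
    rw [← right_one_sub_div (x := x) (by linarith)] at hx
    exact ⟨hx2, hx1, (right_le_right_iff hy (lo_nonneg s)).1 hx.2,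
      (right_le_right_iff (hi_nonneg s) hy).1 hx.1⟩
  · rintro ⟨hx2, -, hy⟩
    simpa [right_one_sub_div (x := x) (by linarith)] using right_mem_cell hy

lemma exists_mem_cell {x : ℝ} (hx : x ∈ Icc (0 : ℝ) 1) (n : ℕ) :
    ∃ s : List Bool, s.length = n ∧ x ∈ cell s := by
  induction n generalizing x with
  | zero => exact ⟨[], rfl, hx⟩
  | succ n ih =>
    obtain ⟨hx0, hx1⟩ := hx
    rcases le_or_gt x (1 / 2) with hx2 | hx2
    · obtain ⟨s, hs, hy⟩ := ih (x := x / (1 - x))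
        ⟨div_nonneg hx0 (by linarith), (div_le_one₀ (by linarith)).2 (by linarith)⟩
      exact ⟨false :: s, by simp [hs], mem_cell_cons_false.2 ⟨hx0, hx2, hy⟩⟩
    · obtain ⟨s, hs, hy⟩ := ih (x := (1 - x) / x)
        ⟨div_nonneg (by linarith) (by linarith), (div_le_one₀ (by linarith)).2 (by linarith)⟩
      exact ⟨true :: s, by simp [hs], mem_cell_cons_true.2 ⟨hx2.le, hx1, hy⟩⟩

lemma eq_lo_or_eq_hi_of_mem_cell {s s' : List Bool} (hlen : s.length = s'.length) (hne : s ≠ s')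
    {x : ℝ} (hx : x ∈ cell s) (hx' : x ∈ cell s') : x = lo s ∨ x = hi s := by
  induction s generalizing s' x with
  | nil => exact absurd (List.length_eq_zero_iff.1 hlen.symm).symm hne
  | cons b t ih =>
    obtain _ | ⟨b', t'⟩ := s'
    · simp at hlen
    have hlen' : t.length = t'.length := by simpa using hlen
    cases b <;> cases b'
    · obtain ⟨-, hx2, hy⟩ := mem_cell_cons_false.1 hx
      have hfix := left_div_one_sub (x := x) (by linarith)
      rcases ih hlen' (by simpa using hne) hy (mem_cell_cons_false.1 hx').2.2 with h | h
      · exact .inl (by rw [lo_cons_false, ← h, hfix])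
      · exact .inr (by rw [hi_cons_false, ← h, hfix])
    · have hx2 := (mem_cell_cons_true.1 hx').1
      exact .inr (le_antisymm hx.2 (hx2.trans' (left_le_half (hi_nonneg t) (hi_le_one t))))
    · have hx2 := (mem_cell_cons_false.1 hx').2.1
      exact .inl (le_antisymm (hx2.trans (half_le_right (hi_nonneg t) (hi_le_one t))) hx.1)
    · obtain ⟨hx2, -, hy⟩ := mem_cell_cons_true.1 hx
      have hfix := right_one_sub_div (x := x) (by linarith)
      rcases ih hlen' (by simpa using hne) hy (mem_cell_cons_true.1 hx').2.2 with h | h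
      · exact .inr (by rw [hi_cons_true, ← h, hfix])
      · exact .inl (by rw [lo_cons_true, ← h, hfix])

lemma eq_of_zero_mem_cell {s s' : List Bool} (hlen : s.length = s'.length)
    (h : 0 ∈ cell s) (h' : 0 ∈ cell s') : s = s' := by
  induction s generalizing s' with
  | nil => exact (List.length_eq_zero_iff.1 hlen.symm).symm
  | cons b t ih =>
    obtain _ | ⟨b', t'⟩ := s'
    · simp at hlen
    cases b
    · cases b'
      · simp only [mem_cell_cons_false, sub_zero, div_one] at h h'
        rw [ih (by simpa using hlen) h.2.2 h'.2.2]
      · norm_num [mem_cell_cons_true] at h'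
    · norm_num [mem_cell_cons_true] at h

lemma eq_of_one_mem_cell {s s' : List Bool} (hlen : s.length = s'.length)
    (h : 1 ∈ cell s) (h' : 1 ∈ cell s') : s = s' := by
  obtain _ | ⟨b, t⟩ := s
  · exact (List.length_eq_zero_iff.1 hlen.symm).symm
  obtain _ | ⟨b', t'⟩ := s'
  · simp at hlen
  cases b
  · norm_num [mem_cell_cons_false] at h
  cases b'
  · norm_num [mem_cell_cons_false] at h'
  norm_num [mem_cell_cons_true] at h h'
  rw [eq_of_zero_mem_cell (by simpa using hlen) h h']

lemma exists_pair_of_mem_cell (n : ℕ) (q : ℝ) :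
    ∃ s₁ s₂ : List Bool, s₁.length = n ∧ s₂.length = n ∧
      ∀ s : List Bool, s.length = n → q ∈ cell s → s = s₁ ∨ s = s₂ := by
  induction n generalizing q with
  | zero => exact ⟨[], [], rfl, rfl, fun s hs _ => .inl (List.length_eq_zero_iff.1 hs)⟩
  | succ n ih =>
    rcases lt_trichotomy q (1 / 2) with hq | rfl | hq
    · obtain ⟨t₁, t₂, h₁, h₂, ht⟩ := ih (q / (1 - q))
      refine ⟨false :: t₁, false :: t₂, by simp [h₁], by simp [h₂], ?_⟩
      rintro (_ | ⟨_ | _, t⟩) hs hmem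
      · simp at hs
      · rcases ht t (by simpa using hs) (mem_cell_cons_false.1 hmem).2.2 with rfl | rfl <;> simp
      · linarith [(mem_cell_cons_true.1 hmem).1]
    · obtain ⟨u, hu, h1u⟩ := exists_mem_cell (x := 1) (by norm_num) n
      refine ⟨false :: u, true :: u, by simp [hu], by simp [hu], ?_⟩
      rintro (_ | ⟨_ | _, t⟩) hs hmem
      · simp at hs
      · norm_num [mem_cell_cons_false] at hmem
        exact .inl (by rw [eq_of_one_mem_cell (by simpa [hu] using hs) hmem h1u])
      · norm_num [mem_cell_cons_true] at hmem
        exact .inr (by rw [eq_of_one_mem_cell (by simpa [hu] using hs) hmem h1u])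
    · obtain ⟨t₁, t₂, h₁, h₂, ht⟩ := ih ((1 - q) / q)
      refine ⟨true :: t₁, true :: t₂, by simp [h₁], by simp [h₂], ?_⟩
      rintro (_ | ⟨_ | _, t⟩) hs hmem
      · simp at hs
      · linarith [(mem_cell_cons_false.1 hmem).2.1]
      · rcases ht t (by simpa using hs) (mem_cell_cons_true.1 hmem).2.2 with rfl | rfl <;> simp

lemma exists_children (t : List Bool) : ∃ b : Bool,
    lo (t ++ [b]) = lo t ∧ hi (t ++ [b]) = lo (t ++ [!b]) ∧ hi (t ++ [!b]) = hi t := by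
  induction t with
  | nil => exact ⟨false, by norm_num [left, right]⟩
  | cons c u ih =>
    obtain ⟨b, e₁, e₂, e₃⟩ := ih
    cases c
    · exact ⟨b, by simp [e₁, e₂, e₃]⟩
    · exact ⟨!b, by simp [e₁, e₂, e₃]⟩

/-! ### Measures determined by their cell masses -/

structure IsMinkowskiMeasure (m : Measure ℝ) : Prop where
  measure_singleton : ∀ x, m {x} = 0
  measure_compl_Icc : m (Icc 0 1)ᶜ = 0
  measure_cell : ∀ s, m (cell s) = 2⁻¹ ^ s.length

namespace IsMinkowskiMeasure

variable {m m₁ m₂ : Measure ℝ}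

lemma nullSingletonClass (h : IsMinkowskiMeasure m) : NullSingletonClass m :=
  ⟨h.measure_singleton⟩

lemma isProbabilityMeasure (h : IsMinkowskiMeasure m) : IsProbabilityMeasure m := by
  refine ⟨?_⟩
  rw [← measure_inter_conull h.measure_compl_Icc, univ_inter, ← cell_nil, h.measure_cell]
  simp

lemma measure_Iic_of_nonpos (h : IsMinkowskiMeasure m) {a : ℝ} (ha : a ≤ 0) : m (Iic a) = 0 := by
  have := h.nullSingletonClass
  refine measure_mono_null (Iic_subset_Iic.2 ha) ?_
  rw [← measure_congr Iio_ae_eq_Iic]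
  exact measure_mono_null (fun x (hx : x < 0) (hx' : x ∈ Icc 0 1) => not_le.2 hx hx'.1)
    h.measure_compl_Icc

lemma measure_Iic_of_one_le (h : IsMinkowskiMeasure m) {a : ℝ} (ha : 1 ≤ a) : m (Iic a) = 1 := by
  rw [← measure_inter_conull h.measure_compl_Icc,
    inter_eq_right.2 (Icc_subset_Iic_self.trans (Iic_subset_Iic.2 ha)), ← cell_nil, h.measure_cell]
  simp

lemma measure_Iic_hi (h : IsMinkowskiMeasure m) (s : List Bool) :
    m (Iic (hi s)) = m (Iic (lo s)) + 2⁻¹ ^ s.length := by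
  have := h.nullSingletonClass
  rw [← Iic_union_Ioc_eq_Iic (lo_le_hi s),
    measure_union (Iic_disjoint_Ioc le_rfl) measurableSet_Ioc, measure_congr Ioc_ae_eq_Icc,
    ← h.measure_cell]
  rfl

/-- The lower endpoint of a child is that of its parent or the upper endpoint of its sibling. -/
lemma measure_Iic_lo_eq (h₁ : IsMinkowskiMeasure m₁) (h₂ : IsMinkowskiMeasure m₂)
    (s : List Bool) : m₁ (Iic (lo s)) = m₂ (Iic (lo s)) := by
  induction s using List.reverseRecOn with
  | nil => rw [lo_nil, h₁.measure_Iic_of_nonpos le_rfl, h₂.measure_Iic_of_nonpos le_rfl]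
  | append_singleton t c ih =>
    obtain ⟨b, e₁, e₂, -⟩ := exists_children t
    obtain rfl | rfl := Bool.eq_or_eq_not c b
    · rwa [e₁]
    · rw [← e₂, h₁.measure_Iic_hi, h₂.measure_Iic_hi, e₁, ih]

lemma measure_Iic_le_add (h₁ : IsMinkowskiMeasure m₁) (h₂ : IsMinkowskiMeasure m₂) {a : ℝ}
    (ha : a ∈ Icc (0 : ℝ) 1) (n : ℕ) : m₁ (Iic a) ≤ m₂ (Iic a) + 2⁻¹ ^ n := by
  obtain ⟨s, rfl, has⟩ := exists_mem_cell ha n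
  calc m₁ (Iic a) ≤ m₁ (Iic (hi s)) := measure_mono (Iic_subset_Iic.2 has.2)
    _ = m₂ (Iic (lo s)) + 2⁻¹ ^ s.length := by rw [h₁.measure_Iic_hi, measure_Iic_lo_eq h₁ h₂]
    _ ≤ m₂ (Iic a) + 2⁻¹ ^ s.length := by gcongr; exact has.1

lemma measure_Iic_le (h₁ : IsMinkowskiMeasure m₁) (h₂ : IsMinkowskiMeasure m₂) {a : ℝ}
    (ha : a ∈ Icc (0 : ℝ) 1) : m₁ (Iic a) ≤ m₂ (Iic a) := by
  have hlim : Tendsto (fun n : ℕ => m₂ (Iic a) + 2⁻¹ ^ n) atTop (𝓝 (m₂ (Iic a))) := by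
    simpa using tendsto_const_nhds.add
      (ENNReal.tendsto_pow_atTop_nhds_zero_of_lt_one (r := 2⁻¹) (by norm_num))
  exact ge_of_tendsto' hlim (measure_Iic_le_add h₁ h₂ ha)

theorem unique (h₁ : IsMinkowskiMeasure m₁) (h₂ : IsMinkowskiMeasure m₂) : m₁ = m₂ := by
  have := h₁.isProbabilityMeasure
  refine Measure.ext_of_Iic m₁ m₂ fun a => ?_
  rcases le_or_gt a 0 with ha | ha
  · rw [h₁.measure_Iic_of_nonpos ha, h₂.measure_Iic_of_nonpos ha]
  rcases le_or_gt 1 a with ha' | ha'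
  · rw [h₁.measure_Iic_of_one_le ha', h₂.measure_Iic_of_one_le ha']
  exact le_antisymm (measure_Iic_le h₁ h₂ ⟨ha.le, ha'.le⟩) (measure_Iic_le h₂ h₁ ⟨ha.le, ha'.le⟩)

end IsMinkowskiMeasure

/-! ### Measures invariant under `H₂` and `H₃` -/

lemma HMap_two_apply (x : ℝ) : HMap 2 x = 1 - x := rfl

lemma HMap_three_apply (x : ℝ) : HMap 3 x = min (x / (1 - x)) ((1 - x) / x) := rfl

lemma measurable_HMap_two : Measurable (HMap 2) := by
  simp only [funext HMap_two_apply]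
  fun_prop

lemma measurable_HMap_three : Measurable (HMap 3) := by
  simp only [funext HMap_three_apply]
  fun_prop

lemma measurableSet_cell (s : List Bool) : MeasurableSet (cell s) := measurableSet_Icc

lemma HMap_three_of_le_half {x : ℝ} (hx0 : 0 ≤ x) (hx : x ≤ 1 / 2) :
    HMap 3 x = x / (1 - x) := by
  rw [HMap_three_apply, min_eq_left]
  rcases hx0.eq_or_lt with rfl | hx0
  · simp
  · rw [div_le_div_iff₀ (by linarith) hx0]
    nlinarith

lemma HMap_three_of_half_le {x : ℝ} (hx : 1 / 2 ≤ x) (hx1 : x ≤ 1) :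
    HMap 3 x = (1 - x) / x := by
  rw [HMap_three_apply, min_eq_right]
  rcases hx1.eq_or_lt with rfl | hx1
  · simp
  · rw [div_le_div_iff₀ (by linarith) (by linarith)]
    nlinarith

lemma preimage_HMap_two_cell_cons_true (s : List Bool) :
    HMap 2 ⁻¹' cell (true :: s) = cell (false :: s) := by
  ext x
  have hlo := left_add_right (lo_nonneg s)
  have hhi := left_add_right (hi_nonneg s)
  simp only [mem_preimage, cell, mem_Icc, HMap_two_apply, lo_cons_true, hi_cons_true,
    lo_cons_false, hi_cons_false]
  constructor <;> rintro ⟨h, h'⟩ <;> constructor <;> linarith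

lemma preimage_HMap_three_cell_inter_Icc (s : List Bool) :
    HMap 3 ⁻¹' cell s ∩ Icc 0 1 = cell (false :: s) ∪ cell (true :: s) := by
  ext x
  simp only [mem_inter_iff, mem_preimage, mem_union, mem_cell_cons_false, mem_cell_cons_true]
  constructor
  · rintro ⟨hx, hx0, hx1⟩
    rcases le_or_gt x (1 / 2) with hx2 | hx2
    · exact .inl ⟨hx0, hx2, HMap_three_of_le_half hx0 hx2 ▸ hx⟩
    · exact .inr ⟨hx2.le, hx1, HMap_three_of_half_le hx2.le hx1 ▸ hx⟩
  · rintro (⟨hx0, hx2, hy⟩ | ⟨hx2, hx1, hy⟩)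
    · exact ⟨(HMap_three_of_le_half hx0 hx2).symm ▸ hy, hx0, by linarith⟩
    · exact ⟨(HMap_three_of_half_le hx2 hx1).symm ▸ hy, by linarith, hx1⟩

lemma cell_cons_false_inter_cell_cons_true_subset (s : List Bool) :
    cell (false :: s) ∩ cell (true :: s) ⊆ {1 / 2} := fun _ ⟨h, h'⟩ =>
  le_antisymm (mem_cell_cons_false.1 h).2.1 (mem_cell_cons_true.1 h').1

/-- `H₃` sends both children of a cell onto it, and `H₂` swaps the two children. -/
theorem isMinkowskiMeasure_of_map_eq (ν : Measure ℝ) [IsProbabilityMeasure ν]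
    (hsupp : ν (Icc (0 : ℝ) 1)ᶜ = 0) (hatomless : ∀ x : ℝ, ν {x} = 0)
    (h2 : ν.map (HMap 2) = ν) (h3 : ν.map (HMap 3) = ν) : IsMinkowskiMeasure ν := by
  refine ⟨hatomless, hsupp, fun s => ?_⟩
  induction s with
  | nil => simpa using measure_inter_conull (s := univ) hsupp
  | cons b t ih =>
    have hsymm : ν (cell (true :: t)) = ν (cell (false :: t)) := by
      rw [← preimage_HMap_two_cell_cons_true,
        ← Measure.map_apply measurable_HMap_two (measurableSet_cell _), h2]
    have hsum : ν (cell (false :: t)) + ν (cell (true :: t)) = 2⁻¹ ^ t.length := by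
      rw [← measure_union₀ (measurableSet_cell _).nullMeasurableSet
          (measure_mono_null (cell_cons_false_inter_cell_cons_true_subset t) (hatomless _)),
        ← preimage_HMap_three_cell_inter_Icc, measure_inter_conull hsupp,
        ← Measure.map_apply measurable_HMap_three (measurableSet_cell _), h3, ih]
    rw [hsymm, ← two_mul] at hsum
    have hfalse : ν (cell (false :: t)) = 2⁻¹ ^ (t.length + 1) := by
      rw [pow_succ, ← hsum, mul_right_comm,
        ENNReal.mul_inv_cancel two_ne_zero ENNReal.ofNat_ne_top, one_mul]
    cases b
    · exact hfalse
    · rw [hsymm, hfalse, List.length_cons]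

/-! ### Continued fractions -/

def seqTail (k : ℕ → ℕ) : ℕ → ℕ := fun i => k (i + 1)

def decHead (k : ℕ → ℕ) : ℕ → ℕ
  | 0 => k 0 - 1
  | i + 1 => k (i + 1)

lemma measurable_seqTail : Measurable seqTail :=
  measurable_pi_lambda _ fun i => measurable_pi_apply (i + 1)

lemma one_le_decHead {k : ℕ → ℕ} (hk : ∀ i, 1 ≤ k i) (h2 : 2 ≤ k 0) : ∀ i, 1 ≤ decHead k i
  | 0 => Nat.le_sub_one_of_lt h2
  | i + 1 => hk (i + 1)

/-- `cfApprox k n t = [k₀, …, k_{n-2}, k_{n-1} + t]`, so `cfVal k` is the limit of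
`cfApprox k n 0`. -/
noncomputable def cfApprox (k : ℕ → ℕ) (n : ℕ) (t : ℝ) : ℝ :=
  ((List.range n).map k).foldr (fun a r => ((a : ℝ) + r)⁻¹) t

lemma cfApprox_zero (k : ℕ → ℕ) (t : ℝ) : cfApprox k 0 t = t := rfl

lemma cfApprox_succ (k : ℕ → ℕ) (n : ℕ) (t : ℝ) :
    cfApprox k (n + 1) t = cfApprox k n ((k n + t)⁻¹) := by
  simp [cfApprox, List.range_succ]

lemma cfApprox_succ' (k : ℕ → ℕ) (n : ℕ) (t : ℝ) :
    cfApprox k (n + 1) t = (k 0 + cfApprox (seqTail k) n t)⁻¹ := by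
  simp [cfApprox, List.range_succ_eq_map, Function.comp_def]
  rfl

lemma measurable_cfApprox (n : ℕ) (t : ℝ) : Measurable fun k : ℕ → ℕ => cfApprox k n t := by
  induction n with
  | zero => exact measurable_const
  | succ n ih =>
    simp_rw [cfApprox_succ']
    exact ((measurable_from_nat.comp (measurable_pi_apply 0)).add
      (ih.comp measurable_seqTail)).inv

lemma inv_add_mem_Icc {a t : ℝ} (ha : 1 ≤ a) (ht : t ∈ Icc (0 : ℝ) 1) :
    (a + t)⁻¹ ∈ Icc (0 : ℝ) 1 :=
  ⟨inv_nonneg.2 (by linarith [ht.1]), inv_le_one_of_one_le₀ (by linarith [ht.1])⟩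

lemma abs_inv_add_sub_inv_add {a t t' : ℝ} (ht : 0 < a + t) (ht' : 0 < a + t') :
    |(a + t)⁻¹ - (a + t')⁻¹| = |t - t'| / ((a + t) * (a + t')) := by
  rw [inv_sub_inv ht.ne' ht'.ne', abs_div, abs_sub_comm, abs_of_pos (mul_pos ht ht')]
  ring_nf

lemma abs_inv_add_sub_inv_add_le {a t t' : ℝ} (ha : 1 ≤ a) (ht : 0 ≤ t) (ht' : 0 ≤ t') :
    |(a + t)⁻¹ - (a + t')⁻¹| ≤ |t - t'| := by
  rw [abs_inv_add_sub_inv_add (by linarith) (by linarith)]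
  exact div_le_self (abs_nonneg _) (by nlinarith)

/-- `(a + (b + t)⁻¹) * (b + t) = a * (b + t) + 1 ≥ 2`, so the four denominators multiply to at
least `4`. -/
lemma abs_inv_add_inv_add_sub_le {a b t t' : ℝ} (ha : 1 ≤ a) (hb : 1 ≤ b) (ht : 0 ≤ t)
    (ht' : 0 ≤ t') :
    |(a + (b + t)⁻¹)⁻¹ - (a + (b + t')⁻¹)⁻¹| ≤ |t - t'| / 4 := by
  have hbt : 0 < b + t := by linarith
  have hbt' : 0 < b + t' := by linarith
  have hs : 0 < (b + t)⁻¹ := inv_pos.2 hbt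
  have hs' : 0 < (b + t')⁻¹ := inv_pos.2 hbt'
  have e : (a + (b + t)⁻¹) * (b + t) = a * (b + t) + 1 := by field_simp
  have e' : (a + (b + t')⁻¹) * (b + t') = a * (b + t') + 1 := by field_simp
  rw [abs_inv_add_sub_inv_add (by linarith) (by linarith), abs_inv_add_sub_inv_add hbt hbt',
    div_div]
  refine div_le_div_of_nonneg_left (abs_nonneg _) (by norm_num) ?_
  nlinarith [mul_le_mul ha (show 1 ≤ b + t by linarith) zero_le_one (by linarith),
    mul_le_mul ha (show 1 ≤ b + t' by linarith) zero_le_one (by linarith)]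

variable {k : ℕ → ℕ}

lemma cfApprox_mem_Icc (hk : ∀ i, 1 ≤ k i) (n : ℕ) {t : ℝ} (ht : t ∈ Icc (0 : ℝ) 1) :
    cfApprox k n t ∈ Icc (0 : ℝ) 1 := by
  induction n generalizing t with
  | zero => exact ht
  | succ n ih => rw [cfApprox_succ]; exact ih (inv_add_mem_Icc (mod_cast hk n) ht)

lemma abs_cfApprox_sub_le (hk : ∀ i, 1 ≤ k i) (n : ℕ) {t t' : ℝ} (ht : t ∈ Icc (0 : ℝ) 1)
    (ht' : t' ∈ Icc (0 : ℝ) 1) :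
    |cfApprox k n t - cfApprox k n t'| ≤ 2 * 2⁻¹ ^ n * |t - t'| := by
  induction n using Nat.twoStepInduction generalizing t t' with
  | zero =>
    rw [cfApprox_zero, cfApprox_zero, pow_zero, mul_one]
    linarith [abs_nonneg (t - t')]
  | one =>
    simpa [cfApprox] using abs_inv_add_sub_inv_add_le (mod_cast hk 0) ht.1 ht'.1
  | more n ih _ =>
    have hk₀ : (1 : ℝ) ≤ k n := mod_cast hk n
    have hk₁ : (1 : ℝ) ≤ k (n + 1) := mod_cast hk (n + 1)
    simp only [cfApprox_succ]
    calc _ ≤ 2 * 2⁻¹ ^ n * (|t - t'| / 4) := by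
          grw [ih (inv_add_mem_Icc hk₀ (inv_add_mem_Icc hk₁ ht))
            (inv_add_mem_Icc hk₀ (inv_add_mem_Icc hk₁ ht')),
            abs_inv_add_inv_add_sub_le hk₀ hk₁ ht.1 ht'.1]
      _ = 2 * 2⁻¹ ^ (n + 2) * |t - t'| := by ring

lemma tendsto_cfApprox (hk : ∀ i, 1 ≤ k i) :
    Tendsto (fun n => cfApprox k n 0) atTop (𝓝 (cfVal k)) := by
  have h01 : (0 : ℝ) ∈ Icc (0 : ℝ) 1 := ⟨le_rfl, zero_le_one⟩
  have hcauchy : CauchySeq (fun n => cfApprox k n 0) := by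
    refine cauchySeq_of_le_geometric 2⁻¹ 2 (by norm_num) fun n => ?_
    have hinv := inv_add_mem_Icc (a := (k n : ℝ)) (mod_cast hk n) h01
    rw [Real.dist_eq, cfApprox_succ]
    calc _ ≤ 2 * 2⁻¹ ^ n * |0 - ((k n : ℝ) + 0)⁻¹| := abs_cfApprox_sub_le hk n h01 hinv
      _ ≤ 2 * 2⁻¹ ^ n := mul_le_of_le_one_right (by positivity)
          (abs_sub_le_of_nonneg_of_le le_rfl zero_le_one hinv.1 hinv.2)
  obtain ⟨L, hL⟩ := cauchySeq_tendsto_of_complete hcauchy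
  have hval : cfVal k = L := hL.limUnder_eq
  rwa [hval]

lemma cfVal_mem_Icc (hk : ∀ i, 1 ≤ k i) : cfVal k ∈ Icc (0 : ℝ) 1 :=
  isClosed_Icc.mem_of_tendsto (tendsto_cfApprox hk)
    (Eventually.of_forall fun n => cfApprox_mem_Icc hk n ⟨le_rfl, zero_le_one⟩)

lemma cfVal_eq_inv (hk : ∀ i, 1 ≤ k i) : cfVal k = (k 0 + cfVal (seqTail k))⁻¹ := by
  have hpos : (k 0 : ℝ) + cfVal (seqTail k) ≠ 0 := by
    have := (cfVal_mem_Icc fun i => hk (i + 1)).1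
    have : (1 : ℝ) ≤ k 0 := mod_cast hk 0
    positivity
  refine tendsto_nhds_unique ((tendsto_cfApprox hk).comp (tendsto_add_atTop_nat 1)) ?_
  simp_rw [Function.comp_def, cfApprox_succ']
  exact ((tendsto_cfApprox fun i => hk (i + 1)).const_add _).inv₀ hpos

lemma cfVal_eq_right (hk : ∀ i, 1 ≤ k i) (h1 : k 0 = 1) :
    cfVal k = right (cfVal (seqTail k)) := by
  rw [cfVal_eq_inv hk, h1, right, Nat.cast_one]

lemma cfVal_eq_left (hk : ∀ i, 1 ≤ k i) (h2 : 2 ≤ k 0) :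
    cfVal k = left (cfVal (decHead k)) := by
  have hx := (cfVal_mem_Icc (k := seqTail k) fun i => hk (i + 1)).1
  have hk0 : (2 : ℝ) ≤ k 0 := mod_cast h2
  rw [cfVal_eq_inv hk, cfVal_eq_inv (one_le_decHead hk h2),
    show seqTail (decHead k) = seqTail k from rfl, show decHead k 0 = k 0 - 1 from rfl,
    Nat.cast_sub (by omega), Nat.cast_one, left_inv (by linarith)]
  ring_nf

lemma aemeasurable_cfVal {Q : Measure (ℕ → ℕ)} (hQ : ∀ᵐ k ∂Q, ∀ i, 1 ≤ k i) :
    AEMeasurable cfVal Q :=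
  aemeasurable_of_tendsto_metrizable_ae' (fun n => (measurable_cfApprox n 0).aemeasurable)
    (hQ.mono fun _ hk => tendsto_cfApprox hk)

/-! ### Cylinders and the i.i.d. geometric digits -/

/-- The allowed values of each digit on the cylinder of a word: a letter `true` is a digit `1`,
and each letter `false` raises the next digit by one. -/
def digitSet : List Bool → ℕ → Set ℕ
  | [], _ => univ
  | true :: _, 0 => {1}
  | true :: s, i + 1 => digitSet s i
  | false :: s, 0 => {j | 2 ≤ j ∧ j - 1 ∈ digitSet s 0}
  | false :: s, i + 1 => digitSet s (i + 1)

def cyl (s : List Bool) : Set (ℕ → ℕ) := univ.pi (digitSet s)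

lemma digitSet_of_length_le {s : List Bool} {i : ℕ} (h : s.length ≤ i) :
    digitSet s i = univ := by
  induction s generalizing i with
  | nil => rfl
  | cons b t ih =>
    obtain ⟨i, rfl⟩ : ∃ j, i = j + 1 := ⟨i - 1, by simp at h; omega⟩
    cases b
    · exact ih (by simp at h; omega)
    · exact ih (by simpa using h)

lemma mem_cyl_cons_true {s : List Bool} {k : ℕ → ℕ} :
    k ∈ cyl (true :: s) ↔ k 0 = 1 ∧ seqTail k ∈ cyl s := by
  constructor
  · intro h
    exact ⟨h 0 trivial, fun i _ => h (i + 1) trivial⟩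
  · rintro ⟨h1, h⟩ (_ | i) -
    exacts [h1, h i trivial]

lemma mem_cyl_cons_false {s : List Bool} {k : ℕ → ℕ} :
    k ∈ cyl (false :: s) ↔ 2 ≤ k 0 ∧ decHead k ∈ cyl s := by
  constructor
  · intro h
    exact ⟨(h 0 trivial).1, fun | 0, _ => (h 0 trivial).2 | i + 1, _ => h (i + 1) trivial⟩
  · rintro ⟨h2, h⟩ (_ | i) -
    exacts [⟨h2, h 0 trivial⟩, h (i + 1) trivial]

lemma exists_mem_cyl {k : ℕ → ℕ} (hk : ∀ i, 1 ≤ k i) (n : ℕ) :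
    ∃ s : List Bool, s.length = n ∧ k ∈ cyl s := by
  induction n generalizing k with
  | zero => exact ⟨[], rfl, fun i _ => trivial⟩
  | succ n ih =>
    by_cases h1 : k 0 = 1
    · obtain ⟨s, hs, hks⟩ := ih fun i => hk (i + 1)
      exact ⟨true :: s, by simp [hs], mem_cyl_cons_true.2 ⟨h1, hks⟩⟩
    · have h2 : 2 ≤ k 0 := by have := hk 0; omega
      obtain ⟨s, hs, hks⟩ := ih (one_le_decHead hk h2)
      exact ⟨false :: s, by simp [hs], mem_cyl_cons_false.2 ⟨h2, hks⟩⟩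

lemma cfVal_mem_cell {s : List Bool} {k : ℕ → ℕ} (hk : ∀ i, 1 ≤ k i) (hks : k ∈ cyl s) :
    cfVal k ∈ cell s := by
  induction s generalizing k with
  | nil => exact cfVal_mem_Icc hk
  | cons b t ih =>
    cases b
    · obtain ⟨h2, hdec⟩ := mem_cyl_cons_false.1 hks
      rw [cfVal_eq_left hk h2]
      exact left_mem_cell (ih (one_le_decHead hk h2) hdec)
    · obtain ⟨h1, htail⟩ := mem_cyl_cons_true.1 hks
      rw [cfVal_eq_right hk h1]
      exact right_mem_cell (ih (fun i => hk (i + 1)) htail)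

lemma geomHalf_apply (A : Set ℕ) :
    geomHalf A = ∑' n : ℕ, A.indicator (fun j => 2⁻¹ ^ j) (n + 1) := by
  rw [geomHalf, Measure.sum_apply _ .of_discrete]
  congr 1 with n
  by_cases h : n + 1 ∈ A <;>
    simp [Measure.dirac_apply' _ MeasurableSet.of_discrete, ENNReal.inv_pow, h]

lemma geomHalf_singleton_zero : geomHalf {0} = 0 := by
  simp [geomHalf_apply]

lemma geomHalf_singleton_one : geomHalf {1} = 2⁻¹ := by
  rw [geomHalf_apply, tsum_eq_single 0 fun n hn => by simp [hn]]
  simp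

lemma geomHalf_univ : geomHalf univ = 1 := by
  simp [geomHalf_apply, ENNReal.tsum_geometric_add_one, ENNReal.one_sub_inv_two,
    ENNReal.inv_mul_cancel]

lemma geomHalf_setOf_sub_one_mem (A : Set ℕ) :
    geomHalf {j | 2 ≤ j ∧ j - 1 ∈ A} = 2⁻¹ * geomHalf A := by
  rw [geomHalf_apply, geomHalf_apply, tsum_eq_zero_add' ENNReal.summable,
    ← ENNReal.tsum_mul_left, indicator_of_notMem (by simp), zero_add]
  congr 1 with n
  by_cases h : n + 1 ∈ A <;> simp [h, pow_succ']

def IsGeomHalfIID (Q : Measure (ℕ → ℕ)) : Prop :=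
  ∀ (m : ℕ) (A : ℕ → Set ℕ), Q {k | ∀ i < m, k i ∈ A i} = ∏ i ∈ Finset.range m, geomHalf (A i)

lemma isGeomHalfIID_map {Ω : Type*} [MeasurableSpace Ω] {P : Measure Ω} {K : ℕ → Ω → ℕ}
    (hK : ∀ i, Measurable (K i)) (hind : iIndepFun K P) (hlaw : ∀ i, P.map (K i) = geomHalf) :
    IsGeomHalfIID (P.map fun ω i => K i ω) := by
  intro m A
  have hset : {k : ℕ → ℕ | ∀ i < m, k i ∈ A i} =
      ⋂ i ∈ Finset.range m, (fun k => k i) ⁻¹' A i := by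
    ext; simp
  have hmeas : MeasurableSet {k : ℕ → ℕ | ∀ i < m, k i ∈ A i} :=
    hset ▸ (Finset.range m).measurableSet_biInter fun i _ => measurable_pi_apply i .of_discrete
  rw [Measure.map_apply (measurable_pi_lambda _ hK) hmeas, hset]
  simp only [preimage_iInter, preimage_preimage]
  rw [hind.measure_inter_preimage_eq_mul _ fun _ _ => .of_discrete]
  exact Finset.prod_congr rfl fun i _ => by rw [← hlaw i, Measure.map_apply (hK i) .of_discrete]

variable {Q : Measure (ℕ → ℕ)}

lemma IsGeomHalfIID.ae_one_le (hQ : IsGeomHalfIID Q) : ∀ᵐ k ∂Q, ∀ i, 1 ≤ k i := by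
  refine ae_all_iff.2 fun i => ae_iff.2 ?_
  let A : ℕ → Set ℕ := fun j => if j = i then {0} else univ
  have hsub : {k : ℕ → ℕ | ¬ 1 ≤ k i} ⊆ {k | ∀ j < i + 1, k j ∈ A j} := fun k hk j _ => by
    by_cases hj : j = i
    · subst hj; simpa [A] using hk
    · simp [A, hj]
  refine measure_mono_null hsub ?_
  rw [hQ, Finset.prod_eq_zero (Finset.self_mem_range_succ i) (by simp [A, geomHalf_singleton_zero])]

lemma prod_geomHalf_digitSet (s : List Bool) {m : ℕ} (hm : s.length ≤ m) :
    ∏ i ∈ Finset.range m, geomHalf (digitSet s i) = 2⁻¹ ^ s.length := by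
  induction s generalizing m with
  | nil => simp [digitSet, geomHalf_univ]
  | cons b t ih =>
    obtain ⟨m, rfl⟩ : ∃ j, m = j + 1 := ⟨m - 1, by simp at hm; omega⟩
    rw [Finset.prod_range_succ']
    cases b
    · simp only [digitSet]
      rw [geomHalf_setOf_sub_one_mem, mul_left_comm, ← Finset.prod_range_succ' (fun i =>
        geomHalf (digitSet t i)), ih (by simp at hm; omega), List.length_cons, pow_succ']
    · rw [digitSet, geomHalf_singleton_one, List.length_cons, pow_succ]
      exact congrArg (· * 2⁻¹) (ih (by simpa using hm))

lemma IsGeomHalfIID.measure_cyl (hQ : IsGeomHalfIID Q) (s : List Bool) :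
    Q (cyl s) = 2⁻¹ ^ s.length := by
  have hcyl : cyl s = {k | ∀ i < s.length, k i ∈ digitSet s i} := by
    ext k
    refine ⟨fun h i _ => h i trivial, fun h i _ => ?_⟩
    by_cases hi : i < s.length
    · exact h i hi
    · rw [digitSet_of_length_le (not_lt.1 hi)]; trivial
  rw [hcyl, hQ, prod_geomHalf_digitSet s le_rfl]

lemma IsGeomHalfIID.measure_preimage_cfVal_singleton (hQ : IsGeomHalfIID Q) (q : ℝ) :
    Q (cfVal ⁻¹' {q}) = 0 := by
  have hbound : ∀ n : ℕ, Q (cfVal ⁻¹' {q}) ≤ 2⁻¹ ^ n + 2⁻¹ ^ n := by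
    intro n
    obtain ⟨s₁, s₂, rfl, h₂, hs⟩ := exists_pair_of_mem_cell n q
    calc Q (cfVal ⁻¹' {q}) ≤ Q (cyl s₁ ∪ cyl s₂) := measure_mono_ae ?_
      _ ≤ Q (cyl s₁) + Q (cyl s₂) := measure_union_le _ _
      _ = _ := by rw [hQ.measure_cyl, hQ.measure_cyl, h₂]
    filter_upwards [hQ.ae_one_le] with k hk (hkq : cfVal k = q)
    obtain ⟨s, hs_len, hks⟩ := exists_mem_cyl hk s₁.length
    rcases hs s hs_len (hkq ▸ cfVal_mem_cell hk hks) with rfl | rfl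
    exacts [.inl hks, .inr hks]
  have hlim : Tendsto (fun n : ℕ => (2⁻¹ : ℝ≥0∞) ^ n + 2⁻¹ ^ n) atTop (𝓝 0) := by
    simpa using (ENNReal.tendsto_pow_atTop_nhds_zero_of_lt_one (r := 2⁻¹) (by norm_num)).add
      (ENNReal.tendsto_pow_atTop_nhds_zero_of_lt_one (r := 2⁻¹) (by norm_num))
  exact le_antisymm (ge_of_tendsto' hlim hbound) zero_le

/-- Up to the null set of the endpoints, `cfVal k` lies in a cell exactly when `k` lies in the
corresponding cylinder. -/
lemma IsGeomHalfIID.measure_preimage_cfVal_cell (hQ : IsGeomHalfIID Q) (s : List Bool) :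
    Q (cfVal ⁻¹' cell s) = 2⁻¹ ^ s.length := by
  refine le_antisymm ?_ ?_
  · calc Q (cfVal ⁻¹' cell s) ≤ Q (cyl s ∪ cfVal ⁻¹' {lo s} ∪ cfVal ⁻¹' {hi s}) :=
          measure_mono_ae ?_
      _ ≤ Q (cyl s) + Q (cfVal ⁻¹' {lo s}) + Q (cfVal ⁻¹' {hi s}) :=
          (measure_union_le _ _).trans (by gcongr; exact measure_union_le _ _)
      _ = 2⁻¹ ^ s.length := by
          rw [hQ.measure_cyl, hQ.measure_preimage_cfVal_singleton,
            hQ.measure_preimage_cfVal_singleton, add_zero, add_zero]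
    filter_upwards [hQ.ae_one_le] with k hk hks
    obtain ⟨s', hlen, hks'⟩ := exists_mem_cyl hk s.length
    by_cases hss : s = s'
    · exact .inl (.inl (hss ▸ hks'))
    · rcases eq_lo_or_eq_hi_of_mem_cell hlen.symm hss hks (cfVal_mem_cell hk hks') with h | h
      exacts [.inl (.inr h), .inr h]
  · rw [← hQ.measure_cyl s]
    exact measure_mono_ae (by filter_upwards [hQ.ae_one_le] with k hk using cfVal_mem_cell hk)

theorem IsGeomHalfIID.isMinkowskiMeasure_map_cfVal (hQ : IsGeomHalfIID Q) :
    IsMinkowskiMeasure (Q.map cfVal) := by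
  have hmeas := aemeasurable_cfVal hQ.ae_one_le
  refine ⟨fun x => ?_, ?_, fun s => ?_⟩
  · rw [Measure.map_apply_of_aemeasurable hmeas (measurableSet_singleton x)]
    exact hQ.measure_preimage_cfVal_singleton x
  · rw [Measure.map_apply_of_aemeasurable hmeas measurableSet_Icc.compl]
    exact ae_iff.1 (hQ.ae_one_le.mono fun k hk => cfVal_mem_Icc hk)
  · rw [Measure.map_apply_of_aemeasurable hmeas (measurableSet_cell s)]
    exact hQ.measure_preimage_cfVal_cell s

end Farey

theorem IsMuStar.isMinkowskiMeasure {μ : Measure ℝ} (hμ : IsMuStar μ) :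
    Farey.IsMinkowskiMeasure μ := by
  obtain ⟨Ω, _, P, K, -, hK, hind, hlaw, rfl⟩ := hμ
  have hQ := Farey.isGeomHalfIID_map hK hind hlaw
  change Farey.IsMinkowskiMeasure (P.map (cfVal ∘ fun ω i => K i ω))
  rw [← AEMeasurable.map_map_of_aemeasurable (Farey.aemeasurable_cfVal hQ.ae_one_le)
    (measurable_pi_lambda _ hK).aemeasurable]
  exact hQ.isMinkowskiMeasure_map_cfVal

theorem stmt9 (ν : Measure ℝ) [IsProbabilityMeasure ν]
    (hsupp : ν (Set.Icc (0 : ℝ) 1)ᶜ = 0)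
    (hatomless : ∀ x : ℝ, ν {x} = 0)
    (h2 : ν.map (HMap 2) = ν) (h3 : ν.map (HMap 3) = ν)
    (μ : Measure ℝ) (hμ : IsMuStar μ) :
    ν = μ :=
  (Farey.isMinkowskiMeasure_of_map_eq ν hsupp hatomless h2 h3).unique hμ.isMinkowskiMeasure
end

section
/- For every sequence (k₁,k₂,…) of positive integers, μ⋆({w : w < [k₁,k₂,…]}) = 2 Σ_{n=1}^{∞} (-1)^{n+1} 2^{-(k₁+k₂+⋯+k_n)}. In other words, the distribution function of μ⋆ at irrational points of (0,1) is Minkowski's question mark function ?([k₁,k₂,…]) = 2 Σ_{n=1}^{∞} (-1)^{n+1} 2^{-(k₁+⋯+k_n)}. -/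
open MeasureTheory ProbabilityTheory Filter
open scoped ENNReal

/-!
For positive digit sequences, `[a₀, a₁, …] < [k₀, k₁, …]` exactly when, at the first index `n`
where `a` and `k` differ, `aₙ > kₙ` if `n` is even and `aₙ < kₙ` if `n` is odd. For i.i.d.
`Geom(1/2)` digits these events are disjoint, and with `Q n = 2^{-(k₀ + ⋯ + k_{n-1})}` the `n`-th
one has probability `Q (n + 1)` for even `n` and `Q n (1 - 2^{1 - kₙ}) = Q n - 2 Q (n + 1)` for
odd `n`. Grouping the indices `2m` and `2m + 1` turns their sum into `2 ∑ (-1)ⁿ Q (n + 1)`.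
-/

open Set

noncomputable def convergent (n : ℕ) (k : ℕ → ℕ) : ℝ :=
  ((List.range n).map k).foldr (fun a r => ((a : ℝ) + r)⁻¹) 0

lemma convergent_succ (n : ℕ) (k : ℕ → ℕ) :
    convergent (n + 1) k = ((k 0 : ℝ) + convergent n (fun i => k (i + 1)))⁻¹ := by
  simp [convergent, List.range_succ_eq_map, List.map_map, Function.comp_def]

lemma measurable_convergent : ∀ n, Measurable (convergent n)
  | 0 => measurable_const
  | n + 1 => by
    simp_rw [funext (convergent_succ n)]
    exact ((measurable_from_nat.comp (measurable_pi_apply 0)).add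
      ((measurable_convergent n).comp (measurable_pi_lambda _ fun i => measurable_pi_apply _))).inv

lemma measurable_cfVal : Measurable cfVal :=
  (StronglyMeasurable.limUnder fun n => (measurable_convergent n).stronglyMeasurable).measurable

section ContinuedFraction

variable {k : ℕ → ℕ}

lemma convergent_mem_Icc (hk : ∀ i, 0 < k i) (n : ℕ) : convergent n k ∈ Icc (0 : ℝ) 1 := by
  induction n generalizing k with
  | zero => simp [convergent]
  | succ n ih =>
    have h0 : (1 : ℝ) ≤ k 0 := by exact_mod_cast hk 0
    have ht := (ih fun i => hk (i + 1)).1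
    rw [convergent_succ]
    exact ⟨by positivity, inv_le_one_of_one_le₀ (by linarith)⟩

/-- Two steps of the recursion `x ↦ (a + x)⁻¹` contract by `4`, as `(a + (b + w)⁻¹)(b + w) ≥ 2`. -/
lemma abs_inv_add_inv_add_sub_le {a b u v : ℝ} (ha : 1 ≤ a) (hb : 1 ≤ b) (hu : 0 ≤ u)
    (hv : 0 ≤ v) : |(a + (b + u)⁻¹)⁻¹ - (a + (b + v)⁻¹)⁻¹| ≤ |u - v| / 4 := by
  have hform : ∀ w, 0 ≤ w → (a + (b + w)⁻¹)⁻¹ = (b + w) / (a * (b + w) + 1) := by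
    intro w hw
    have : b + w ≠ 0 := by positivity
    field_simp
  have hden : ∀ w, 0 ≤ w → 2 ≤ a * (b + w) + 1 := fun w hw => by nlinarith
  have hu' := hden u hu
  have hv' := hden v hv
  rw [hform u hu, hform v hv, div_sub_div _ _ (by linarith) (by linarith),
    show (b + u) * (a * (b + v) + 1) - (a * (b + u) + 1) * (b + v) = u - v by ring, abs_div,
    abs_of_pos (by positivity : 0 < (a * (b + u) + 1) * (a * (b + v) + 1))]
  exact div_le_div_of_nonneg_left (abs_nonneg _) (by norm_num) (by nlinarith)

lemma abs_convergent_sub_le (hk : ∀ i, 0 < k i) (j : ℕ) {m n : ℕ} (hm : 2 * j ≤ m)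
    (hn : 2 * j ≤ n) : |convergent m k - convergent n k| ≤ (1 / 4 : ℝ) ^ j := by
  induction j generalizing k m n with
  | zero =>
    obtain ⟨hm0, hm1⟩ := convergent_mem_Icc hk m
    obtain ⟨hn0, hn1⟩ := convergent_mem_Icc hk n
    rw [pow_zero, abs_sub_le_iff]
    constructor <;> linarith
  | succ j ih =>
    obtain ⟨m, rfl⟩ : ∃ m', m = m' + 2 := ⟨m - 2, by omega⟩
    obtain ⟨n, rfl⟩ : ∃ n', n = n' + 2 := ⟨n - 2, by omega⟩
    have hk2 : ∀ i, 0 < k (i + 2) := fun i => hk (i + 2)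
    simp only [convergent_succ]
    calc _ ≤ |convergent m (fun i => k (i + 2)) - convergent n (fun i => k (i + 2))| / 4 :=
          abs_inv_add_inv_add_sub_le (by exact_mod_cast hk 0) (by exact_mod_cast hk 1)
            (convergent_mem_Icc hk2 m).1 (convergent_mem_Icc hk2 n).1
      _ ≤ (1 / 4 : ℝ) ^ j / 4 := by gcongr; exact ih hk2 (by omega) (by omega)
      _ = (1 / 4 : ℝ) ^ (j + 1) := by ring

lemma tendsto_convergent (hk : ∀ i, 0 < k i) :
    Tendsto (fun n => convergent n k) atTop (nhds (cfVal k)) := by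
  refine tendsto_nhds_limUnder (cauchySeq_tendsto_of_complete ?_)
  refine Metric.cauchySeq_iff.2 fun ε hε => ?_
  obtain ⟨j, hj⟩ := exists_pow_lt_of_lt_one hε (by norm_num : (1 / 4 : ℝ) < 1)
  exact ⟨2 * j, fun m hm n hn => (abs_convergent_sub_le hk j hm hn).trans_lt hj⟩

lemma cfVal_mem_Icc (hk : ∀ i, 0 < k i) : cfVal k ∈ Icc (0 : ℝ) 1 :=
  isClosed_Icc.mem_of_tendsto (tendsto_convergent hk)
    (Eventually.of_forall (convergent_mem_Icc hk))

lemma cfVal_eq_inv_add (hk : ∀ i, 0 < k i) :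
    cfVal k = ((k 0 : ℝ) + cfVal (fun i => k (i + 1)))⁻¹ := by
  have hpos : (k 0 : ℝ) + cfVal (fun i => k (i + 1)) ≠ 0 := by
    have : (0 : ℝ) < k 0 := by exact_mod_cast hk 0
    linarith [(cfVal_mem_Icc fun i => hk (i + 1)).1]
  refine tendsto_nhds_unique ((tendsto_convergent hk).comp (tendsto_add_atTop_nat 1)) ?_
  simp only [Function.comp_def, convergent_succ]
  exact (tendsto_const_nhds.add (tendsto_convergent fun i => hk (i + 1))).inv₀ hpos

lemma cfVal_pos (hk : ∀ i, 0 < k i) : 0 < cfVal k := by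
  have : (0 : ℝ) < k 0 := by exact_mod_cast hk 0
  have := (cfVal_mem_Icc fun i => hk (i + 1)).1
  rw [cfVal_eq_inv_add hk]
  positivity

lemma cfVal_lt_one (hk : ∀ i, 0 < k i) : cfVal k < 1 := by
  have : (1 : ℝ) ≤ k 0 := by exact_mod_cast hk 0
  have := cfVal_pos fun i => hk (i + 1)
  rw [cfVal_eq_inv_add hk]
  exact inv_lt_one_of_one_lt₀ (by linarith)

lemma cfVal_mem_Ioo_inv (hk : ∀ i, 0 < k i) :
    cfVal k ∈ Ioo ((k 0 : ℝ) + 1)⁻¹ (k 0 : ℝ)⁻¹ := by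
  have : (0 : ℝ) < k 0 := by exact_mod_cast hk 0
  have h0 := cfVal_pos fun i => hk (i + 1)
  have h1 := cfVal_lt_one fun i => hk (i + 1)
  rw [cfVal_eq_inv_add hk]
  exact ⟨inv_strictAnti₀ (by positivity) (by linarith), inv_strictAnti₀ this (by linarith)⟩

end ContinuedFraction

/-- `[k₀, k₁, …]` decreases in the digits of even index and increases in those of odd index;
`AltLt n` is the order on the `n`-th digit that it preserves. -/
def AltLt (n a b : ℕ) : Prop := if Even n then b < a else a < b

section Order

def CFLtAt (n : ℕ) (a b : ℕ → ℕ) : Prop := (∀ i < n, a i = b i) ∧ AltLt n (a n) (b n)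

lemma altLt_succ_iff {n a b : ℕ} : AltLt (n + 1) a b ↔ AltLt n b a := by
  by_cases h : Even n <;> simp [AltLt, Nat.even_add_one, h]

lemma AltLt.ne {n a b : ℕ} (h : AltLt n a b) : a ≠ b := by
  unfold AltLt at h
  split_ifs at h <;> omega

lemma altLt_or_altLt_of_ne {n a b : ℕ} (h : a ≠ b) : AltLt n a b ∨ AltLt n b a := by
  unfold AltLt
  split_ifs <;> omega

lemma CFLtAt.eq {m n : ℕ} {a b : ℕ → ℕ} (hm : CFLtAt m a b) (hn : CFLtAt n a b) : m = n := by
  by_contra hne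
  rcases lt_or_gt_of_ne hne with h | h
  · exact hm.2.ne (hn.1 m h)
  · exact hn.2.ne (hm.1 n h)

variable {a b : ℕ → ℕ}

lemma cfVal_lt_of_cfLtAt (ha : ∀ i, 0 < a i) (hb : ∀ i, 0 < b i) {n : ℕ} (h : CFLtAt n a b) :
    cfVal a < cfVal b := by
  induction n generalizing a b with
  | zero =>
    have hlt : b 0 + 1 ≤ a 0 := by simpa [CFLtAt, AltLt] using h.2
    calc cfVal a < (a 0 : ℝ)⁻¹ := (cfVal_mem_Ioo_inv ha).2
      _ ≤ ((b 0 : ℝ) + 1)⁻¹ := inv_anti₀ (by positivity) (by exact_mod_cast hlt)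
      _ < cfVal b := (cfVal_mem_Ioo_inv hb).1
  | succ n ih =>
    have htail : cfVal (fun i => b (i + 1)) < cfVal (fun i => a (i + 1)) :=
      ih (fun i => hb (i + 1)) (fun i => ha (i + 1))
        ⟨fun i hi => (h.1 (i + 1) (by omega)).symm, altLt_succ_iff.1 h.2⟩
    have hb0 : (0 : ℝ) < b 0 := by exact_mod_cast hb 0
    rw [cfVal_eq_inv_add ha, cfVal_eq_inv_add hb, h.1 0 n.succ_pos]
    exact inv_strictAnti₀ (by linarith [cfVal_pos fun i => hb (i + 1)]) (by linarith)

lemma cfVal_lt_iff (ha : ∀ i, 0 < a i) (hb : ∀ i, 0 < b i) :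
    cfVal a < cfVal b ↔ ∃ n, CFLtAt n a b := by
  classical
  refine ⟨fun h => ?_, fun ⟨n, hn⟩ => cfVal_lt_of_cfLtAt ha hb hn⟩
  have hex : ∃ i, a i ≠ b i := Function.ne_iff.1 fun hab => h.ne (congrArg cfVal hab)
  have hagree : ∀ i < Nat.find hex, a i = b i := fun i hi => not_not.1 (Nat.find_min hex hi)
  refine (altLt_or_altLt_of_ne (Nat.find_spec hex)).elim (fun hlt => ⟨_, hagree, hlt⟩) ?_
  intro hgt
  exact absurd (cfVal_lt_of_cfLtAt hb ha ⟨fun i hi => (hagree i hi).symm, hgt⟩) h.asymm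

end Order

lemma geomHalf_apply (s : Set ℕ) :
    geomHalf s = ∑' n : ℕ, s.indicator (fun x => ((2 : ℝ≥0∞) ^ x)⁻¹) (n + 1) := by
  rw [geomHalf, Measure.sum_apply _ MeasurableSet.of_discrete]
  congr 1; funext n
  by_cases h : n + 1 ∈ s <;> simp [h]

lemma ofReal_inv_two_pow (m : ℕ) : ENNReal.ofReal ((2 : ℝ) ^ m)⁻¹ = ((2 : ℝ≥0∞) ^ m)⁻¹ := by
  rw [ENNReal.ofReal_inv_of_pos (by positivity), ENNReal.ofReal_pow zero_le_two,
    ENNReal.ofReal_ofNat]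

lemma geomHalf_singleton {m : ℕ} (hm : 0 < m) :
    geomHalf {m} = ENNReal.ofReal ((2 : ℝ) ^ m)⁻¹ := by
  obtain ⟨j, rfl⟩ : ∃ j, m = j + 1 := ⟨m - 1, by omega⟩
  rw [geomHalf_apply, tsum_eq_single j fun n hn => Set.indicator_of_notMem (by simpa using hn) _,
    Set.indicator_of_mem (mem_singleton _), ofReal_inv_two_pow]

lemma geomHalf_Ioi (m : ℕ) : geomHalf (Ioi m) = ((2 : ℝ≥0∞) ^ m)⁻¹ := by
  rw [geomHalf_apply, ← ENNReal.summable.sum_add_tsum_nat_add',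
    Finset.sum_eq_zero fun i hi => Set.indicator_of_notMem (by simpa using hi) _, zero_add]
  have hterm : ∀ n, (Ioi m).indicator (fun x => ((2 : ℝ≥0∞) ^ x)⁻¹) (n + m + 1)
      = ((2 : ℝ≥0∞) ^ m)⁻¹ * 2⁻¹ ^ (n + 1) := fun n => by
    rw [Set.indicator_of_mem (by simp only [mem_Ioi]; omega), ENNReal.inv_pow, ENNReal.inv_pow]
    ring
  rw [tsum_congr hterm, ENNReal.tsum_mul_left, ENNReal.tsum_geometric_add_one,
    ENNReal.one_sub_inv_two, inv_inv, ENNReal.inv_mul_cancel (by simp) (by simp), mul_one]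

instance : IsProbabilityMeasure geomHalf :=
  ⟨by simpa [geomHalf_apply] using geomHalf_Ioi 0⟩

noncomputable def altLtProb (n m : ℕ) : ℝ :=
  if Even n then ((2 : ℝ) ^ m)⁻¹ else 1 - 2 * ((2 : ℝ) ^ m)⁻¹

lemma geomHalf_setOf_altLt (n : ℕ) {m : ℕ} (hm : 0 < m) :
    geomHalf {x | AltLt n x m} = ENNReal.ofReal (altLtProb n m) := by
  unfold AltLt altLtProb
  split_ifs
  · rw [ofReal_inv_two_pow]
    exact geomHalf_Ioi m
  · obtain ⟨j, rfl⟩ : ∃ j, m = j + 1 := ⟨m - 1, by omega⟩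
    have hset : {x | x < j + 1} = (Ioi j)ᶜ := by ext; simp
    have h2 : 2 * ((2 : ℝ) ^ (j + 1))⁻¹ = ((2 : ℝ) ^ j)⁻¹ := by rw [pow_succ]; field_simp
    rw [hset, prob_compl_eq_one_sub measurableSet_Ioi, geomHalf_Ioi, h2,
      ENNReal.ofReal_sub _ (by positivity), ENNReal.ofReal_one, ofReal_inv_two_pow]

lemma altLtProb_nonneg (n : ℕ) {m : ℕ} (hm : 0 < m) : 0 ≤ altLtProb n m := by
  unfold altLtProb
  split_ifs
  · positivity
  · rw [sub_nonneg, ← div_eq_mul_inv, div_le_one (by positivity)]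
    simpa using pow_le_pow_right₀ one_le_two hm

noncomputable def prefixProb (k : ℕ → ℕ) (n : ℕ) : ℝ := ∏ i ∈ Finset.range n, ((2 : ℝ) ^ k i)⁻¹

lemma two_zpow_neg_sum_eq_prefixProb (k : ℕ → ℕ) (n : ℕ) :
    (2 : ℝ) ^ (-∑ j ∈ Finset.range n, (k j : ℤ)) = prefixProb k n := by
  induction n with
  | zero => simp [prefixProb]
  | succ n ih =>
    rw [prefixProb, Finset.prod_range_succ, ← prefixProb, ← ih, Finset.sum_range_succ, neg_add,
      zpow_add₀ two_ne_zero, zpow_neg _ (k n : ℤ), zpow_natCast]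

lemma prefixProb_nonneg (k : ℕ → ℕ) (n : ℕ) : 0 ≤ prefixProb k n :=
  Finset.prod_nonneg fun _ _ => by positivity

section Series

variable {k : ℕ → ℕ}

lemma prefixProb_le (hk : ∀ i, 0 < k i) (n : ℕ) : prefixProb k n ≤ (1 / 2 : ℝ) ^ n := by
  calc prefixProb k n ≤ ∏ _i ∈ Finset.range n, (1 / 2 : ℝ) :=
        Finset.prod_le_prod (fun i _ => by positivity) fun i _ => by
          rw [one_div]
          exact inv_anti₀ two_pos (by simpa using pow_le_pow_right₀ one_le_two (hk i))
    _ = (1 / 2 : ℝ) ^ n := by simp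

lemma hasSum_prefixProb_mul_altLtProb (hk : ∀ i, 0 < k i) :
    HasSum (fun n => prefixProb k n * altLtProb n (k n)) (qmark k) := by
  set q := prefixProb k
  have hq : Summable q :=
    summable_geometric_two.of_nonneg_of_le (prefixProb_nonneg k) (prefixProb_le hk)
  obtain ⟨S₁, hS₁⟩ : Summable fun m => q (2 * m + 1) := hq.comp_injective fun a b h => by omega
  obtain ⟨S₂, hS₂⟩ : Summable fun m => q (2 * m + 2) := hq.comp_injective fun a b h => by omega
  have hsucc : ∀ n, q (n + 1) = q n * ((2 : ℝ) ^ k n)⁻¹ := fun n => Finset.prod_range_succ _ _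
  have hterm_even : ∀ m, q (2 * m) * altLtProb (2 * m) (k (2 * m)) = q (2 * m + 1) := by
    simp [altLtProb, hsucc]
  have hterm_odd : ∀ m, q (2 * m + 1) * altLtProb (2 * m + 1) (k (2 * m + 1))
      = q (2 * m + 1) - 2 * q (2 * m + 2) := fun m => by
    simp only [altLtProb, Nat.not_even_two_mul_add_one, if_false, hsucc (2 * m + 1)]
    ring
  have halt : HasSum (fun n => (-1 : ℝ) ^ n * q (n + 1)) (S₁ - S₂) := by
    rw [sub_eq_add_neg]
    refine HasSum.even_add_odd ?_ ?_
    · simpa [pow_mul] using hS₁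
    · simpa [pow_succ, pow_mul, add_assoc] using hS₂.neg
  have hqmark : qmark k = 2 * (S₁ - S₂) := by
    simp only [qmark, two_zpow_neg_sum_eq_prefixProb, q, halt.tsum_eq]
  rw [hqmark]
  convert HasSum.even_add_odd (f := fun n => q n * altLtProb n (k n))
    (by simpa only [hterm_even] using hS₁)
    (by simpa only [hterm_odd] using hS₁.sub (hS₂.mul_left 2)) using 1
  ring

end Series

lemma setOf_cfLtAt_eq {Ω : Type*} {K : ℕ → Ω → ℕ} (n : ℕ) (k : ℕ → ℕ) :
    {ω | CFLtAt n (fun i => K i ω) k}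
      = ⋂ i ∈ Finset.range (n + 1), K i ⁻¹' (if i = n then {x | AltLt n x (k n)} else {k i}) := by
  ext ω
  simp only [CFLtAt, mem_ofPred_eq, mem_iInter, Finset.mem_range, Nat.lt_succ_iff_lt_or_eq, or_imp,
    forall_and, forall_eq, mem_preimage, if_true]
  exact and_congr_left' (forall₂_congr fun i hi => by simp [hi.ne])

section Digits

variable {Ω : Type*} [MeasurableSpace Ω] {P : Measure Ω} {K : ℕ → Ω → ℕ}

lemma ae_pos_of_map_eq_geomHalf {X : Ω → ℕ} (hX : Measurable X) (h : P.map X = geomHalf) :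
    ∀ᵐ ω ∂P, 0 < X ω := by
  refine ae_of_ae_map hX.aemeasurable ?_
  rw [h, ae_iff]
  simpa [← Set.singleton_def] using geomHalf_apply {0}

lemma measurableSet_setOf_cfLtAt (hK : ∀ i, Measurable (K i)) (n : ℕ) (k : ℕ → ℕ) :
    MeasurableSet {ω | CFLtAt n (fun i => K i ω) k} := by
  rw [setOf_cfLtAt_eq]
  exact .biInter (Finset.countable_toSet _) fun i _ => hK i .of_discrete

lemma measure_cfLtAt (hK : ∀ i, Measurable (K i)) (hind : iIndepFun K P)
    (hlaw : ∀ i, P.map (K i) = geomHalf) {k : ℕ → ℕ} (hk : ∀ i, 0 < k i) (n : ℕ) :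
    P {ω | CFLtAt n (fun i => K i ω) k} = ENNReal.ofReal (prefixProb k n * altLtProb n (k n)) := by
  have hlaw' : ∀ i s, P (K i ⁻¹' s) = geomHalf s := fun i s => by
    rw [← hlaw i, Measure.map_apply (hK i) .of_discrete]
  rw [setOf_cfLtAt_eq, hind.measure_inter_preimage_eq_mul _ fun _ _ => .of_discrete,
    Finset.prod_range_succ, if_pos rfl, hlaw', geomHalf_setOf_altLt n (hk n),
    Finset.prod_congr rfl fun i hi => by
      rw [if_neg (Finset.mem_range.1 hi).ne, hlaw', geomHalf_singleton (hk i)],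
    ← ENNReal.ofReal_prod_of_nonneg fun i _ => by positivity]
  exact (ENNReal.ofReal_mul (prefixProb_nonneg k n)).symm

end Digits

theorem stmt10 (μ : Measure ℝ) (hμ : IsMuStar μ)
    (k : ℕ → ℕ) (hk : ∀ i, 0 < k i) :
    μ {w : ℝ | w < cfVal k} = ENNReal.ofReal (qmark k) := by
  obtain ⟨Ω, _, P, K, -, hK, hind, hlaw, rfl⟩ := hμ
  have hX : Measurable fun ω i => K i ω := measurable_pi_lambda _ hK
  have hpos : ∀ᵐ ω ∂P, ∀ i, 0 < K i ω :=
    ae_all_iff.2 fun i => ae_pos_of_map_eq_geomHalf (hK i) (hlaw i)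
  have hunion : {ω | cfVal (fun i => K i ω) < cfVal k}
      =ᵐ[P] ⋃ n, {ω | CFLtAt n (fun i => K i ω) k} := by
    refine Filter.eventuallyEq_set.2 ?_
    filter_upwards [hpos] with ω hω
    simpa only [mem_ofPred_eq, mem_iUnion] using cfVal_lt_iff hω hk
  have hsum := hasSum_prefixProb_mul_altLtProb hk
  calc P.map (fun ω => cfVal fun i => K i ω) {w | w < cfVal k}
      = P {ω | cfVal (fun i => K i ω) < cfVal k} :=
        Measure.map_apply (measurable_cfVal.comp hX) measurableSet_Iio
    _ = ∑' n, P {ω | CFLtAt n (fun i => K i ω) k} := by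
        rw [measure_congr hunion, measure_iUnion
          (fun m n hmn => disjoint_left.2 fun ω hm hn => hmn (hm.eq hn))
          fun n => measurableSet_setOf_cfLtAt hK n k]
    _ = ∑' n, ENNReal.ofReal (prefixProb k n * altLtProb n (k n)) :=
        tsum_congr (measure_cfLtAt hK hind hlaw hk)
    _ = ENNReal.ofReal (qmark k) := by
        rw [← ENNReal.ofReal_tsum_of_nonneg (fun n => mul_nonneg (prefixProb_nonneg k n)
          (altLtProb_nonneg n (hk n))) hsum.summable, hsum.tsum_eq]
end
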